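/- arXiv:2308.00299 — 7 statements merged into one kernel-verified Lean document; each statement's English description precedes it below -/
import Mathlib

section
/- If there exists a splitting full κ-tree, then κ > 2^ℵ₀. -/
open Cardinal Ordinal Set

noncomputable section

open scoped Classical in
/-- The height of a node in a tree-like partial order: the order type of its set
of strict predecessors (0 if that set happens not to be well-ordered). -/
def heightIn {α : Type} [PartialOrder α] (x : α) : Ordinal :=
  if h : IsWellOrder {y // y ∈ {y : α | y < x}} (Subrel (· < ·) {y : α | y < x}) then
    @Ordinal.type _ _ h
  else 0

/-- `(α, <)` is a `κ`-tree: predecessors are well-ordered, every level below `κ`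
is nonempty of size `< κ`, and the `κ`-th level is empty (all heights are `< κ`). -/
structure IsKTree (κ : Cardinal) (α : Type) [PartialOrder α] : Prop where
  wo : ∀ x : α, IsWellOrder {y // y ∈ {y : α | y < x}} (Subrel (· < ·) {y : α | y < x})
  height_lt : ∀ x : α, heightIn x < κ.ord
  level_ne : ∀ o < κ.ord, ∃ x : α, heightIn x = o
  level_small : ∀ o < κ.ord, #{x : α | heightIn x = o} < κ

/-- An `o`-branch: a chain whose set of heights is exactly `{β | β < o}`. -/
def IsBranch {α : Type} [PartialOrder α] (B : Set α) (o : Ordinal) : Prop :=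
  IsChain (· < ·) B ∧ heightIn '' B = Set.Iio o

/-- A vanishing branch: one with no upper bound in the tree. -/
def Vanishing {α : Type} [PartialOrder α] (B : Set α) : Prop :=
  ¬ ∃ y : α, ∀ x ∈ B, x ≤ y

/-- A `κ`-tree is full iff for every limit `o < κ` there is at most one
vanishing `o`-branch. -/
def IsFull (κ : Cardinal) (α : Type) [PartialOrder α] : Prop :=
  ∀ o : Ordinal, Order.IsSuccLimit o → o < κ.ord →
    ∀ B₁ B₂ : Set α, IsBranch B₁ o → Vanishing B₁ → IsBranch B₂ o → Vanishing B₂ → B₁ = B₂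

/-- Splitting: every node has at least two immediate successors. -/
def IsSplitting (α : Type) [PartialOrder α] : Prop :=
  ∀ x : α, ∃ y z : α, x ⋖ y ∧ x ⋖ z ∧ y ≠ z

section Aux

variable {α : Type} [PartialOrder α]
  (hwo : ∀ x : α, IsWellOrder {y // y ∈ {y : α | y < x}} (Subrel (· < ·) {y : α | y < x}))

include hwo

theorem heightIn_eq (x : α) :
    heightIn x = @Ordinal.type _ (Subrel (· < ·) {y : α | y < x}) (hwo x) := by
  simp only [heightIn]
  rw [dif_pos (hwo x)]

theorem heightIn_eq_typein {w y : α} (h : w < y) :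
    heightIn w = @Ordinal.typein _ (Subrel (· < ·) {v : α | v < y}) (hwo y) ⟨w, h⟩ := by
  haveI : IsWellOrder (Subtype {v : α | v < y}) (Subrel (· < ·) {v : α | v < y}) := hwo y
  haveI : IsWellOrder (Subtype {v : α | v < w}) (Subrel (· < ·) {v : α | v < w}) := hwo w
  rw [heightIn_eq hwo, ← Ordinal.type_subrel]
  refine Ordinal.type_eq.2 ⟨?_⟩
  exact ⟨⟨fun v => ⟨⟨v.1, lt_trans v.2 h⟩, v.2⟩, fun b => ⟨b.1.1, b.2⟩,
    fun v => rfl, fun b => rfl⟩, Iff.rfl⟩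

theorem heightIn_lt_of_lt {w y : α} (h : w < y) : heightIn w < heightIn y := by
  haveI : IsWellOrder (Subtype {v : α | v < y}) (Subrel (· < ·) {v : α | v < y}) := hwo y
  rw [heightIn_eq_typein hwo h, heightIn_eq hwo]
  exact Ordinal.typein_lt_type _ _

theorem lt_of_heightIn_lt {w x y : α} (hw : w < y) (hx : x < y)
    (h : heightIn w < heightIn x) : w < x := by
  haveI : IsWellOrder (Subtype {v : α | v < y}) (Subrel (· < ·) {v : α | v < y}) := hwo y
  rw [heightIn_eq_typein hwo hw, heightIn_eq_typein hwo hx] at h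
  exact (Ordinal.typein_lt_typein (Subrel (· < ·) {v : α | v < y})).1 h

theorem heightIn_surj {y : α} {o : Ordinal} (h : o < heightIn y) :
    ∃ w : α, w < y ∧ heightIn w = o := by
  haveI : IsWellOrder (Subtype {v : α | v < y}) (Subrel (· < ·) {v : α | v < y}) := hwo y
  rw [heightIn_eq hwo] at h
  obtain ⟨a, ha⟩ := Ordinal.typein_surj _ h
  exact ⟨a.1, a.2, by rw [heightIn_eq_typein hwo a.2]; exact ha⟩

theorem heightIn_covBy {x y : α} (h : x ⋖ y) : heightIn y = heightIn x + 1 := by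
  have h1 : heightIn x < heightIn y := heightIn_lt_of_lt hwo h.lt
  refine le_antisymm ?_ (Order.add_one_le_of_lt h1)
  by_contra hc
  push_neg at hc
  obtain ⟨z, hzy, hz⟩ := heightIn_surj hwo hc
  have hxz : x < z := by
    refine lt_of_heightIn_lt hwo h.lt hzy ?_
    rw [hz]; exact Order.lt_add_one_iff.2 le_rfl
  exact h.2 hxz hzy

theorem tree_comparable {u v y : α} (hu : u ≤ y) (hv : v ≤ y) :
    u = v ∨ u < v ∨ v < u := by
  rcases eq_or_lt_of_le hu with rfl | hu
  · rcases eq_or_lt_of_le hv with rfl | hv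
    · exact Or.inl rfl
    · exact Or.inr (Or.inr hv)
  · rcases eq_or_lt_of_le hv with rfl | hv
    · exact Or.inr (Or.inl hu)
    · haveI : IsWellOrder (Subtype {v : α | v < y}) (Subrel (· < ·) {v : α | v < y}) := hwo y
      rcases trichotomous_of (Subrel (· < ·) {v : α | v < y}) ⟨u, hu⟩ ⟨v, hv⟩ with h | h | h
      · exact Or.inr (Or.inl h)
      · exact Or.inl (congrArg Subtype.val h)
      · exact Or.inr (Or.inr h)

end Aux

/-- If there exists a splitting full `κ`-tree, then `κ > 2^ℵ₀`. -/
theorem full_splitting_implies_continuum_lt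
    (κ : Cardinal) (hreg : κ.IsRegular) (hunc : ℵ₀ < κ)
    (α : Type) [PartialOrder α] (htree : IsKTree κ α)
    (hfull : IsFull κ α) (hsplit : IsSplitting α) :
    2 ^ ℵ₀ < κ := by
  classical
  have hwo := htree.wo
  have homega : (ω : Ordinal) < κ.ord := by
    rw [← Cardinal.ord_aleph0]; exact Cardinal.ord_lt_ord.2 hunc
  have h0 : (0 : Ordinal) < κ.ord := lt_of_le_of_lt zero_le homega
  obtain ⟨root, hroot⟩ := htree.level_ne 0 h0
  choose Y Z hY hZ hYZ using hsplit
  set X : List Bool → α := fun s => s.foldr (fun b x => if b then Y x else Z x) root with hX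
  have hcov : ∀ (b : Bool) (s : List Bool), X s ⋖ X (b :: s) := by
    intro b s
    cases b
    · exact hZ _
    · exact hY _
  have hXheight : ∀ s : List Bool, heightIn (X s) = (s.length : Ordinal) := by
    intro s
    induction s with
    | nil => simpa [hX] using hroot
    | cons b s ih =>
      rw [heightIn_covBy hwo (hcov b s), ih]
      simp [Nat.cast_succ]
  -- the branches
  set L : (ℕ → Bool) → ℕ → List Bool := fun f n => (List.range n).reverse.map f with hL
  have hLsucc : ∀ f n, L f (n + 1) = f n :: L f n := by
    intro f n
    simp [hL, List.range_succ]
  set c : (ℕ → Bool) → ℕ → α := fun f n => X (L f n) with hc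
  have hccov : ∀ f n, c f n ⋖ c f (n + 1) := by
    intro f n
    rw [hc]; simp only [hLsucc]
    exact hcov _ _
  have hcmono : ∀ f, StrictMono (c f) := fun f =>
    strictMono_nat_of_lt_succ fun n => (hccov f n).lt
  have hcheight : ∀ f n, heightIn (c f n) = (n : Ordinal) := by
    intro f n
    rw [hc]; rw [hXheight]
    simp [hL]
  -- incompatibility of distinct branches
  have hne : ∀ f g : ℕ → Bool, f ≠ g → ∃ n, c f n ≠ c g n ∧ heightIn (c f n) = heightIn (c g n) := by
    intro f g hfg
    have hex : ∃ k, f k ≠ g k := by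
      by_contra hk; push_neg at hk; exact hfg (funext hk)
    set n := Nat.find hex with hn
    have h1 : f n ≠ g n := Nat.find_spec hex
    have h2 : ∀ k < n, f k = g k := fun k hk => by
      by_contra hc'; exact absurd (Nat.find_le hc') (not_le.2 hk)
    have hLeq : L f n = L g n := by
      simp only [hL]
      refine List.map_congr_left ?_
      intro k hk
      exact h2 k (by simpa using hk)
    refine ⟨n + 1, ?_, by rw [hcheight, hcheight]⟩
    simp only [hc, hLsucc, hLeq]
    cases hfn : f n <;> cases hgn : g n
    · exact absurd (hfn.trans hgn.symm) h1
    · simp only [hX]; intro hEq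
      exact (hYZ (X (L g n))) (by simpa using hEq.symm)
    · simp only [hX]; intro hEq
      exact (hYZ (X (L g n))) (by simpa using hEq)
    · exact absurd (hfn.trans hgn.symm) h1
  -- no common upper bound for distinct branches
  have hnocommon : ∀ f g : ℕ → Bool, f ≠ g →
      ¬ ∃ y : α, (∀ n, c f n ≤ y) ∧ (∀ n, c g n ≤ y) := by
    intro f g hfg ⟨y, hyf, hyg⟩
    obtain ⟨n, hne1, hne2⟩ := hne f g hfg
    rcases tree_comparable hwo (hyf n) (hyg n) with h | h | h
    · exact hne1 h
    · exact absurd hne2 (ne_of_lt (heightIn_lt_of_lt hwo h))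
    · exact absurd hne2.symm (ne_of_lt (heightIn_lt_of_lt hwo h))
  -- the branch sets
  set B : (ℕ → Bool) → Set α := fun f => {w | ∃ n, w ≤ c f n} with hB
  have hBchain : ∀ f, IsChain (· < ·) (B f) := by
    intro f u hu v hv huv
    obtain ⟨n, hn⟩ := hu
    obtain ⟨m, hm⟩ := hv
    have hu' : u ≤ c f (max n m) := le_trans hn ((hcmono f).monotone (le_max_left n m))
    have hv' : v ≤ c f (max n m) := le_trans hm ((hcmono f).monotone (le_max_right n m))
    rcases tree_comparable hwo hu' hv' with h | h | h
    · exact absurd h huv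
    · exact Or.inl h
    · exact Or.inr h
  have hBbranch : ∀ f, IsBranch (B f) ω := by
    intro f
    refine ⟨hBchain f, ?_⟩
    ext o
    constructor
    · rintro ⟨w, ⟨n, hn⟩, rfl⟩
      have : heightIn w ≤ (n : Ordinal) := by
        rcases eq_or_lt_of_le hn with rfl | hlt
        · exact (hcheight f n).le
        · rw [← hcheight f n]
          exact (heightIn_lt_of_lt hwo hlt).le
      exact lt_of_le_of_lt this (Ordinal.nat_lt_omega0 n)
    · intro ho
      obtain ⟨n, rfl⟩ := Ordinal.lt_omega0.1 ho
      exact ⟨c f n, ⟨n, le_rfl⟩, hcheight f n⟩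
  -- each non-vanishing branch yields a bound at level ω
  have hbound : ∀ f : ℕ → Bool, (∃ y : α, ∀ n, c f n ≤ y) →
      ∃ z : α, heightIn z = ω ∧ ∀ n, c f n ≤ z := by
    intro f ⟨y, hy⟩
    have hylt : ∀ n, c f n < y := by
      intro n
      rcases eq_or_lt_of_le (hy n) with rfl | h
      · exact absurd (hy (n + 1)) (hcmono f (Nat.lt_succ_self n) : c f n < c f (n + 1)).not_ge
      · exact h
    have hωy : ω ≤ heightIn y := by
      rw [Ordinal.omega0_le]
      intro n
      rw [← hcheight f n]
      exact (heightIn_lt_of_lt hwo (hylt n)).le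
    rcases eq_or_lt_of_le hωy with h | h
    · exact ⟨y, h.symm, fun n => (hylt n).le⟩
    · obtain ⟨z, hzy, hz⟩ := heightIn_surj hwo h
      refine ⟨z, hz, fun n => ?_⟩
      refine (lt_of_heightIn_lt hwo (hylt n) hzy ?_).le
      rw [hz, hcheight]
      exact Ordinal.nat_lt_omega0 n
  -- split the continuum into bounded and vanishing parts
  set T : Set (ℕ → Bool) := {f | ∃ y : α, ∀ n, c f n ≤ y} with hT
  -- the bounded part injects into level ω
  have hTlevel : #↥T ≤ #{x : α | heightIn x = ω} := by
    choose z hz1 hz2 using fun (f : T) => hbound f.1 f.2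
    refine Cardinal.mk_le_of_injective (f := fun f : T => (⟨z f, hz1 f⟩ : {x : α | heightIn x = ω})) ?_
    intro f g hfg
    have hzeq : z f = z g := congrArg Subtype.val hfg
    by_contra hne'
    have hne'' : f.1 ≠ g.1 := fun h => hne' (Subtype.ext h)
    exact hnocommon f.1 g.1 hne'' ⟨z f, hz2 f, fun n => by rw [hzeq]; exact hz2 g n⟩
  -- the vanishing part is a subsingleton
  have hTc : Tᶜ.Subsingleton := by
    intro f hf g hg
    by_contra hfg
    have hvf : Vanishing (B f) := by
      intro ⟨y, hy⟩
      exact hf ⟨y, fun n => hy (c f n) ⟨n, le_rfl⟩⟩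
    have hvg : Vanishing (B g) := by
      intro ⟨y, hy⟩
      exact hg ⟨y, fun n => hy (c g n) ⟨n, le_rfl⟩⟩
    have hBeq : B f = B g :=
      hfull ω Ordinal.isSuccLimit_omega0 homega _ _ (hBbranch f) hvf (hBbranch g) hvg
    obtain ⟨n, hne1, hne2⟩ := hne f g hfg
    have h1 : c f n ∈ B f := ⟨n, le_rfl⟩
    have h2 : c g n ∈ B f := hBeq ▸ (⟨n, le_rfl⟩ : c g n ∈ B g)
    rcases hBchain f h1 h2 hne1 with h | h
    · exact absurd hne2 (ne_of_lt (heightIn_lt_of_lt hwo h))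
    · exact absurd hne2.symm (ne_of_lt (heightIn_lt_of_lt hwo h))
  -- cardinal arithmetic
  have hmk : (2 : Cardinal) ^ ℵ₀ = #(ℕ → Bool) := by
    rw [← Cardinal.mk_bool, ← Cardinal.mk_nat, Cardinal.power_def]
  have hsum : #(ℕ → Bool) = #↥T + #↥Tᶜ := (Cardinal.mk_sum_compl T).symm
  have hTc1 : #↥Tᶜ ≤ 1 := Cardinal.mk_le_one_iff_set_subsingleton.2 hTc
  have hlev : #{x : α | heightIn x = ω} < κ := htree.level_small ω homega
  calc (2 : Cardinal) ^ ℵ₀ = #↥T + #↥Tᶜ := by rw [hmk, hsum]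
    _ ≤ #{x : α | heightIn x = ω} + 1 := add_le_add hTlevel hTc1
    _ < κ := Cardinal.add_lt_of_lt hreg.aleph0_le hlev
        (lt_trans Cardinal.one_lt_aleph0 hunc)

end
end

section
/- Suppose X is a κ-sized subset of a κ-Souslin tree T. Then the set Y of elements of X admitting two incompatible proper extensions in X has size κ. -/
open Cardinal Ordinal Set

noncomputable section

/-- A `κ`-branch: a chain meeting every level below `κ`. -/
def IsKBranch (κ : Cardinal) {α : Type} [PartialOrder α] (B : Set α) : Prop :=
  IsChain (· < ·) B ∧ ∀ o < κ.ord, ∃ x ∈ B, heightIn x = o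

/-- `κ`-Aronszajn: a `κ`-tree with no `κ`-branch. -/
def IsAronszajn (κ : Cardinal) (α : Type) [PartialOrder α] : Prop :=
  ¬ ∃ B : Set α, IsKBranch κ B

/-- Normality: every node has extensions at every higher level below `κ`. -/
def IsNormalTree (κ : Cardinal) (α : Type) [PartialOrder α] : Prop :=
  ∀ x : α, ∀ o : Ordinal, heightIn x < o → o < κ.ord → ∃ y : α, x < y ∧ heightIn y = o

/-- `D` is a club (closed unbounded set) in the ordinal `o`. -/
def IsClubIn (D : Set Ordinal) (o : Ordinal) : Prop :=
  D ⊆ Set.Iio o ∧ (∀ a < o, ∃ b ∈ D, a ≤ b) ∧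
    ∀ a < o, (D ∩ Set.Iio a).Nonempty → sSup (D ∩ Set.Iio a) = a → a ∈ D

/-- `S` is stationary in the ordinal `o`. -/
def StatIn (S : Set Ordinal) (o : Ordinal) : Prop :=
  ∀ D : Set Ordinal, IsClubIn D o → (S ∩ D).Nonempty

/-- The strict order of the product tree `S ⊗ T`: pairs of nodes of equal
height, ordered coordinatewise. -/
def prodLt {α β : Type} [PartialOrder α] [PartialOrder β]
    (p q : {p : α × β // heightIn p.1 = heightIn p.2}) : Prop :=
  p.1.1 < q.1.1 ∧ p.1.2 < q.1.2

/-- No chain of size `κ` with respect to the strict relation `lt`. -/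
def RelNoKChains {γ : Type} (lt : γ → γ → Prop) (κ : Cardinal) : Prop :=
  ∀ C : Set γ, (∀ x ∈ C, ∀ y ∈ C, x ≠ y → lt x y ∨ lt y x) → #C < κ

/-- No antichain of size `κ`: every `κ`-sized set contains two `lt`-comparable
elements. -/
def RelNoKAntichains {γ : Type} (lt : γ → γ → Prop) (κ : Cardinal) : Prop :=
  ∀ A : Set γ, (∀ x ∈ A, ∀ y ∈ A, x ≠ y → ¬ lt x y ∧ ¬ lt y x) → #A < κ

/-- `κ`-Souslin with respect to the strict relation `lt`. -/
def RelSouslin {γ : Type} (lt : γ → γ → Prop) (κ : Cardinal) : Prop :=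
  RelNoKChains lt κ ∧ RelNoKAntichains lt κ

/-- If `T` is a `κ`-Souslin tree and `X ⊆ T` has size `κ`, then the set `Y` of
elements of `X` admitting two incompatible proper extensions in `X` has size
`κ`. -/
theorem souslin_many_splitting_points
    (κ : Cardinal) (hreg : κ.IsRegular) (hunc : ℵ₀ < κ)
    (β : Type) [PartialOrder β] (hT : IsKTree κ β)
    (hTsous : RelSouslin ((· < ·) : β → β → Prop) κ)
    (X : Set β) (hX : #X = κ) :
    #{x ∈ X | ∃ y ∈ X, ∃ z ∈ X, x < y ∧ x < z ∧ ¬ y ≤ z ∧ ¬ z ≤ y} = κ := by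
  set Y := {x ∈ X | ∃ y ∈ X, ∃ z ∈ X, x < y ∧ x < z ∧ ¬ y ≤ z ∧ ¬ z ≤ y} with hYdef
  have hYX : Y ⊆ X := fun x hx => hx.1
  have hle : #Y ≤ κ := hX ▸ Cardinal.mk_le_mk_of_subset hYX
  rcases hle.lt_or_eq with hlt | h
  · exfalso
    -- X \ Y has size κ
    have hX'le : #(X \ Y : Set β) ≤ κ := hX ▸ Cardinal.mk_le_mk_of_subset diff_subset
    have hX' : #(X \ Y : Set β) = κ := by
      by_contra hne
      have hsum := Cardinal.mk_diff_add_mk hYX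
      rw [hX] at hsum
      exact absurd hsum
        (ne_of_lt (Cardinal.add_lt_of_lt hreg.aleph0_le (hX'le.lt_of_ne hne) hlt))
    -- predecessors of any node are few
    have hpred : ∀ x : β, #{y : β | y < x} < κ := by
      intro x
      have hwo := hT.wo x
      have heq : heightIn x = @Ordinal.type _ _ hwo := dif_pos hwo
      have hcard : (heightIn x).card = #{y : β | y < x} := by
        rw [heq]; exact Ordinal.card_type _
      rw [← hcard]
      exact Cardinal.lt_ord.mp (hT.height_lt x)
    -- successors in X of any non-splitting node are few
    have hsucc : ∀ x ∈ X \ Y, #{y ∈ X | x < y} < κ := by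
      intro x hx
      apply hTsous.1
      intro y hy z hz hne
      by_contra hcon
      push_neg at hcon
      exact hx.2 ⟨hx.1, y, hy.1, z, hz.1, hy.2, hz.2,
        fun h => hcon.1 (h.lt_of_ne hne), fun h => hcon.2 (h.lt_of_ne (Ne.symm hne))⟩
    -- comparable elements (within X) of any non-splitting node are few
    set comp : β → Set β := fun x => {y : β | y < x} ∪ {y ∈ X | x < y} with hcompdef
    have hcomp : ∀ x ∈ X \ Y, #(comp x) < κ := by
      intro x hx
      calc #(comp x) ≤ #{y : β | y < x} + #{y ∈ X | x < y} := Cardinal.mk_union_le _ _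
        _ < κ := Cardinal.add_lt_of_lt hreg.aleph0_le (hpred x) (hsucc x hx)
    -- a maximal antichain in X \ Y
    set S : Set (Set β) :=
      {A | A ⊆ X \ Y ∧ ∀ a ∈ A, ∀ b ∈ A, a ≠ b → ¬ a < b ∧ ¬ b < a} with hSdef
    obtain ⟨m, hm⟩ := zorn_subset S (by
      intro c hcS hchain
      refine ⟨⋃₀ c, ⟨?_, ?_⟩, fun s hs => subset_sUnion_of_mem hs⟩
      · exact sUnion_subset fun s hs => (hcS hs).1
      · rintro a ⟨s, hs, has⟩ b ⟨t, ht, hbt⟩ hne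
        rcases hchain.total hs ht with hst | hts
        · exact (hcS ht).2 a (hst has) b hbt hne
        · exact (hcS hs).2 a has b (hts hbt) hne)
    have hmS : m ∈ S := hm.prop
    -- m is small
    have hmlt : #m < κ := hTsous.2 m hmS.2
    -- every element of X \ Y is in m or comparable to an element of m
    have hcover : (X \ Y) ⊆ m ∪ ⋃ a : m, comp a := by
      intro w hw
      by_cases hwm : w ∈ m
      · exact Or.inl hwm
      by_contra hcon
      -- w is incomparable with every element of m; insert it
      have hins : insert w m ∈ S := by
        constructor
        · exact insert_subset hw hmS.1
        · have hkey : ∀ a ∈ m, ¬ w < a ∧ ¬ a < w := by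
            intro a ha
            have h1 : w ∉ comp a := fun h => hcon (Or.inr (mem_iUnion.mpr ⟨⟨a, ha⟩, h⟩))
            constructor
            · exact fun h => h1 (Or.inl h)
            · exact fun h => h1 (Or.inr ⟨hw.1, h⟩)
          rintro a (rfl | ha) b (rfl | hb) hne
          · exact absurd rfl hne
          · exact hkey b hb
          · exact (hkey a ha).symm
          · exact hmS.2 a ha b hb hne
      have := hm.le_of_ge hins (subset_insert w m)
      exact hwm (this (mem_insert w m))
    -- cardinality contradiction
    have hUlt : #(⋃ a : m, comp a) < κ := by
      refine lt_of_le_of_lt (Cardinal.mk_iUnion_le _) ?_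
      exact Cardinal.mul_lt_of_lt hreg.aleph0_le hmlt
        (Cardinal.iSup_lt_of_isRegular hreg hmlt fun a => hcomp a (hmS.1 a.2))
    have : #(X \ Y : Set β) < κ := by
      calc #(X \ Y : Set β) ≤ #((m ∪ ⋃ a : m, comp a : Set β)) :=
            Cardinal.mk_le_mk_of_subset hcover
        _ ≤ #m + #(⋃ a : m, comp a) := Cardinal.mk_union_le _ _
        _ < κ := Cardinal.add_lt_of_lt hreg.aleph0_le hmlt hUlt
    exact absurd hX' (ne_of_lt this)
  · exact h

end
end

section
/- If ◇_{S,B}(κ-trees) holds then ◇(B) holds; moreover, for every f : κ → 2, the set {β ∈ B : f↾β = f_β} reflects stationarily often in S (i.e., the set of α ∈ S where it is stationary in α is stationary in κ). -/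
open Cardinal Ordinal Set

noncomputable section

/-- Transfinite sequences of ordinals, represented as functions
`Ordinal → Option Ordinal`; the domain is the set of inputs where the value is
`some`. -/
abbrev TSeq : Type 1 := Ordinal → Option Ordinal

/-- The restriction `f↾β` of a transfinite sequence. -/
def tres (f : TSeq) (β : Ordinal) : TSeq :=
  fun o => if o < β then f o else none

/-- The `α`-th level of a streamlined tree: its elements with domain exactly
`{o | o < α}`. -/
def tlevel (T : Set TSeq) (α : Ordinal) : Set TSeq :=
  {f ∈ T | ∀ o : Ordinal, f o ≠ none ↔ o < α}

/-- A streamlined `κ`-tree: a downward-closed set of transfinite sequences of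
length `< κ` with values in `κ`, all of whose levels below `κ` are nonempty of
size `< κ`. -/
structure IsStreamlined (κ : Cardinal) (T : Set TSeq) : Prop where
  downward : ∀ f ∈ T, ∀ β : Ordinal, tres f β ∈ T
  bounded : ∀ f ∈ T, ∃ α < κ.ord, f ∈ tlevel T α
  values : ∀ f ∈ T, ∀ o v, f o = some v → v < κ.ord
  level_ne : ∀ α < κ.ord, (tlevel T α).Nonempty
  level_small : ∀ α < κ.ord, #(tlevel T α) < Cardinal.lift.{1} κ

/-- The length-`β` initial segment of a total function `g` on the ordinals,
viewed as a transfinite sequence. -/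
def seqOf (g : Ordinal → Ordinal) (β : Ordinal) : TSeq :=
  fun o => if o < β then some (g o) else none

/-- `⟨f_β : β ∈ B⟩` witnesses `◇_{S,B}(κ-trees)`: for every streamlined
`κ`-tree `T`, for stationarily many `α ∈ S`, every `f` in the `α`-th level of
`T` satisfies that `{β ∈ B ∩ α | f↾β = f_β}` is stationary in `α`. -/
def DiamondTreesWitness (κ : Cardinal) (S B : Set Ordinal) (f_ : Ordinal → TSeq) : Prop :=
  ∀ T : Set TSeq, IsStreamlined κ T →
    StatIn {α ∈ S | ∀ f ∈ tlevel T α,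
      StatIn {β | β ∈ B ∧ β < α ∧ tres f β = f_ β} α} κ.ord

/-- `⟨f_β : β ∈ B⟩` witnesses `◇*_{S,B}(κ-trees)`: for every streamlined
`κ`-tree `T` there is a club `D ⊆ κ` such that for every `α ∈ S ∩ D`, every
`f` in the `α`-th level of `T` satisfies that `{β ∈ B ∩ α | f↾β = f_β}` is
stationary in `α`. -/
def DiamondStarTreesWitness (κ : Cardinal) (S B : Set Ordinal) (f_ : Ordinal → TSeq) : Prop :=
  ∀ T : Set TSeq, IsStreamlined κ T → ∃ D : Set Ordinal, IsClubIn D κ.ord ∧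
    ∀ α ∈ S ∩ D, ∀ f ∈ tlevel T α,
      StatIn {β | β ∈ B ∧ β < α ∧ tres f β = f_ β} α


lemma statIn_mono {s t : Set Ordinal} {o : Ordinal} (h : s ⊆ t) (hs : StatIn s o) :
    StatIn t o := fun D hD => (hs D hD).imp fun x hx => ⟨h hx.1, hx.2⟩

lemma tres_seqOf (g : Ordinal → Ordinal) {β α : Ordinal} (h : β ≤ α) :
    tres (seqOf g α) β = seqOf g β := by
  funext o
  simp only [tres, seqOf]
  by_cases h1 : o < β
  · rw [if_pos h1, if_pos (h1.trans_le h), if_pos h1]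
  · rw [if_neg h1, if_neg h1]

lemma tres_seqOf' (g : Ordinal → Ordinal) (β α : Ordinal) :
    tres (seqOf g α) β = seqOf g (min β α) := by
  funext o
  simp only [tres, seqOf, lt_min_iff]
  split_ifs with h1 h2 h3 h3 <;> tauto

lemma seqOf_mem_tlevel (g : Ordinal → Ordinal) {c α : Ordinal} (hα : α < c) :
    seqOf g α ∈ tlevel {f | ∃ β < c, f = seqOf g β} α := by
  refine ⟨⟨α, hα, rfl⟩, fun o => ?_⟩
  simp only [seqOf]
  split_ifs with h <;> simp [h]

lemma tlevel_eq (g : Ordinal → Ordinal) {c α : Ordinal} (hα : α < c) :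
    tlevel {f | ∃ β < c, f = seqOf g β} α = {seqOf g α} := by
  apply Set.eq_singleton_iff_unique_mem.mpr
  refine ⟨seqOf_mem_tlevel g hα, ?_⟩
  rintro f ⟨⟨β, hβ, rfl⟩, hdom⟩
  have hiff : ∀ o : Ordinal, o < β ↔ o < α := by
    intro o
    rw [← hdom o]
    simp only [seqOf]
    split_ifs with h <;> simp [h]
  have : β = α := by
    rcases lt_trichotomy β α with h | h | h
    · exact absurd ((hiff β).mpr h) (lt_irrefl β)
    · exact h
    · exact absurd ((hiff α).mp h) (lt_irrefl α)
  rw [this]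

lemma isStreamlined_seqOf (κ : Cardinal) (hκ : ℵ₀ ≤ κ) (g : Ordinal → Ordinal)
    (hg : ∀ o < κ.ord, g o < κ.ord) :
    IsStreamlined κ {f | ∃ β < κ.ord, f = seqOf g β} := by
  constructor
  · rintro f ⟨β, hβ, rfl⟩ γ
    exact ⟨min γ β, (min_le_right γ β).trans_lt hβ, tres_seqOf' g γ β⟩
  · rintro f ⟨β, hβ, rfl⟩
    exact ⟨β, hβ, seqOf_mem_tlevel g hβ⟩
  · rintro f ⟨β, hβ, rfl⟩ o v hv
    simp only [seqOf] at hv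
    split_ifs at hv with h
    · cases hv; exact hg o (h.trans hβ)
  · intro α hα
    exact ⟨seqOf g α, seqOf_mem_tlevel g hα⟩
  · intro α hα
    rw [tlevel_eq g hα, Cardinal.mk_singleton]
    exact one_lt_aleph0.trans_le (Cardinal.aleph0_le_lift.mpr hκ)


lemma club_restrict {D : Set Ordinal} {c α : Ordinal} (hD : IsClubIn D c) (hα : α < c)
    (hne : (D ∩ Iio α).Nonempty) (hsup : sSup (D ∩ Iio α) = α) : IsClubIn (D ∩ Iio α) α := by
  refine ⟨Set.inter_subset_right, fun a ha => ?_, fun a ha hne' hsup' => ?_⟩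
  · obtain ⟨b, hb, hab⟩ := exists_lt_of_lt_csSup hne (hsup ▸ ha)
    exact ⟨b, hb, hab.le⟩
  · have heq : D ∩ Iio α ∩ Iio a = D ∩ Iio a := by
      rw [Set.inter_assoc, Set.Iio_inter_Iio, min_eq_right ha.le]
    rw [heq] at hne' hsup'
    exact ⟨hD.2.2 a (ha.trans hα) hne' hsup', ha⟩

lemma club_limitPoints {κ : Cardinal.{0}} (hreg : κ.IsRegular) (hunc : ℵ₀ < κ)
    {D : Set Ordinal.{0}} (hD : IsClubIn D κ.ord) :
    IsClubIn {α | α < κ.ord ∧ (D ∩ Iio α).Nonempty ∧ sSup (D ∩ Iio α) = α} κ.ord := by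
  have hlim : Order.IsSuccLimit κ.ord := Cardinal.isSuccLimit_ord hreg.aleph0_le
  refine ⟨fun α hα => hα.1, fun a ha => ?_, fun a ha hne' hsup' => ?_⟩
  · -- unboundedness: build an ω-chain above a
    have H : ∀ x : Ordinal, ∃ y, y ∈ D ∧ (x < κ.ord → x < y) := by
      intro x
      by_cases hx : x < κ.ord
      · obtain ⟨y, hy, hxy⟩ := hD.2.1 (x + 1) (by
          rw [Ordinal.add_one_eq_succ]; exact hlim.succ_lt hx)
        refine ⟨y, hy, fun _ => lt_of_lt_of_le ?_ hxy⟩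
        rw [Ordinal.add_one_eq_succ]; exact Order.lt_succ x
      · obtain ⟨y, hy, _⟩ := hD.2.1 a ha
        exact ⟨y, hy, fun h => absurd h hx⟩
    choose F hFD hFlt using H
    obtain ⟨b0, hb0D, hab0⟩ := hD.2.1 a ha
    have hbD : ∀ n : ℕ, F^[n] b0 ∈ D := by
      intro n; induction n with
      | zero => exact hb0D
      | succ n ih => rw [Function.iterate_succ_apply']; exact hFD _
    have hblt : ∀ n : ℕ, F^[n] b0 < κ.ord := fun n => hD.1 (hbD n)
    have hbmono : ∀ n : ℕ, F^[n] b0 < F^[n + 1] b0 := by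
      intro n
      rw [Function.iterate_succ_apply']
      exact hFlt _ (hblt n)
    have hακ : (⨆ n : ℕ, F^[n] b0) < κ.ord := by
      apply iSup_lt_ord _ hblt
      rw [Cardinal.mk_nat, hreg.cof_eq]
      exact hunc
    have hble : ∀ n : ℕ, F^[n] b0 ≤ ⨆ n : ℕ, F^[n] b0 :=
      fun n => le_ciSup (Ordinal.bddAbove_range _) n
    have hbltα : ∀ n : ℕ, F^[n] b0 < ⨆ n : ℕ, F^[n] b0 :=
      fun n => (hbmono n).trans_le (hble (n + 1))
    have hneα : (D ∩ Iio (⨆ n : ℕ, F^[n] b0)).Nonempty :=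
      ⟨b0, hbD 0, Set.mem_Iio.mpr (hbltα 0)⟩
    refine ⟨_, ⟨hακ, hneα, ?_⟩, hab0.trans (hbltα 0).le⟩
    apply le_antisymm
    · exact csSup_le hneα fun x hx => (Set.mem_Iio.mp hx.2).le
    · apply le_of_forall_lt
      intro c hc
      obtain ⟨n, hn⟩ := (lt_ciSup_iff (Ordinal.bddAbove_range _)).mp hc
      calc c < F^[n] b0 := hn
        _ ≤ sSup (D ∩ Iio (⨆ n : ℕ, F^[n] b0)) :=
            le_csSup ⟨_, fun x hx => (Set.mem_Iio.mp hx.2).le⟩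
              (Set.mem_inter (hbD n) (Set.mem_Iio.mpr (hbltα n)))
  · -- closedness
    obtain ⟨α', hα'mem, hα'lt⟩ := hne'
    replace hα'lt : α' < a := hα'lt
    have hDa : (D ∩ Iio a).Nonempty := by
      obtain ⟨x, hxD, hxlt⟩ := hα'mem.2.1
      exact ⟨x, hxD, Set.mem_Iio.mpr (lt_trans hxlt hα'lt)⟩
    refine ⟨ha, hDa, ?_⟩
    apply le_antisymm
    · exact csSup_le hDa fun x hx => (Set.mem_Iio.mp hx.2).le
    · apply le_of_forall_lt
      intro c hc
      have hne'' : ({α | α < κ.ord ∧ (D ∩ Iio α).Nonempty ∧ sSup (D ∩ Iio α) = α}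
          ∩ Iio a).Nonempty := ⟨α', hα'mem, Set.mem_Iio.mpr hα'lt⟩
      obtain ⟨β, hβ, hcβ⟩ := exists_lt_of_lt_csSup hne'' (hsup' ▸ hc)
      have hβlt : β < a := hβ.2
      have h2 : c < sSup (D ∩ Iio β) := lt_of_lt_of_eq hcβ hβ.1.2.2.symm
      obtain ⟨y, hy, hcy⟩ := exists_lt_of_lt_csSup hβ.1.2.1 h2
      calc c < y := hcy
        _ ≤ sSup (D ∩ Iio a) :=
            le_csSup ⟨a, fun x hx => (Set.mem_Iio.mp hx.2).le⟩
              (Set.mem_inter hy.1 (Set.mem_Iio.mpr (lt_trans hy.2 hβlt)))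

/-- If `◇_{S,B}(κ-trees)` holds, then its witness also witnesses `◇(B)`;
moreover, for every `f : κ → 2`, the set `{β ∈ B | f↾β = f_β}` reflects
stationarily often in `S`. -/
theorem diamond_trees_implies_diamond
    (κ : Cardinal) (hreg : κ.IsRegular) (hunc : ℵ₀ < κ)
    (S B : Set Ordinal)
    (hSsub : S ⊆ {o | o < κ.ord ∧ ℵ₀ < o.cof}) (hSstat : StatIn S κ.ord)
    (hBsub : B ⊆ Set.Iio κ.ord) (hBstat : StatIn B κ.ord)
    (f_ : Ordinal → TSeq) (hwit : DiamondTreesWitness κ S B f_) :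
    (∀ g : Ordinal → Ordinal, (∀ o < κ.ord, g o < κ.ord) →
       StatIn {β ∈ B | seqOf g β = f_ β} κ.ord) ∧
    (∀ g : Ordinal → Ordinal, (∀ o < κ.ord, g o < 2) →
       StatIn {α ∈ S | StatIn {β | β ∈ B ∧ β < α ∧ seqOf g β = f_ β} α} κ.ord) := by
  constructor
  · intro g hg D hD
    have hT := isStreamlined_seqOf κ hreg.aleph0_le g hg
    have hD' := club_limitPoints hreg hunc hD
    obtain ⟨α, hαG, hαD'⟩ := hwit _ hT _ hD'
    have hακ : α < κ.ord := hαD'.1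
    have hstat := hαG.2 (seqOf g α) (seqOf_mem_tlevel g hακ)
    have hclub : IsClubIn (D ∩ Set.Iio α) α := club_restrict hD hακ hαD'.2.1 hαD'.2.2
    obtain ⟨β, hβmem, hβD, _⟩ := hstat _ hclub
    exact ⟨β, ⟨hβmem.1, by rw [← tres_seqOf g hβmem.2.1.le]; exact hβmem.2.2⟩, hβD⟩
  · intro g hg
    have h2κ : (2 : Ordinal) < κ.ord := by
      have h1 : (2 : Ordinal) < Ordinal.omega0 := by exact_mod_cast Ordinal.nat_lt_omega0 2
      have h2 : Ordinal.omega0 ≤ κ.ord := by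
        rw [← Cardinal.ord_aleph0]
        exact Cardinal.ord_le_ord.mpr hreg.aleph0_le
      exact h1.trans_le h2
    have hg' : ∀ o < κ.ord, g o < κ.ord := fun o ho => (hg o ho).trans h2κ
    have hT := isStreamlined_seqOf κ hreg.aleph0_le g hg'
    refine statIn_mono ?_ (hwit _ hT)
    intro α hα
    refine ⟨hα.1, ?_⟩
    have hακ : α < κ.ord := (hSsub hα.1).1
    refine statIn_mono ?_ (hα.2 (seqOf g α) (seqOf_mem_tlevel g hακ))
    intro β hβ
    exact ⟨hβ.1, hβ.2.1, by rw [← tres_seqOf g hβ.2.1.le]; exact hβ.2.2⟩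

end
end

section
/- If ◇_S(κ-trees) holds for a stationary S ⊆ E^κ_{>ω}, then κ is either a Mahlo cardinal or the successor of a regular uncountable cardinal. -/
open Cardinal Ordinal Set

noncomputable section

lemma bddAbove_of_subset_Iio {s : Set Ordinal} {o : Ordinal} (h : s ⊆ Set.Iio o) :
    BddAbove s := ⟨o, fun _ hx => (h hx).le⟩

lemma ord_lt_add_one (x : Ordinal) : x < x + 1 := by
  rw [Ordinal.add_one_eq_succ]; exact Order.lt_succ x

lemma isClubIn_Ioo {a o : Ordinal} (ha : a < o) (ho : Order.IsSuccLimit o) :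
    IsClubIn (Set.Ioo a o) o := by
  refine ⟨fun x hx => hx.2, fun x hx => ?_, fun x hx hne hsup => ?_⟩
  · exact ⟨max x (a + 1), ⟨lt_of_lt_of_le (ord_lt_add_one a) (le_max_right _ _),
      max_lt hx (ho.succ_lt ha)⟩, le_max_left _ _⟩
  · obtain ⟨y, hy⟩ := hne
    exact ⟨hy.1.1.trans hy.2, hx⟩

lemma isClubIn_inter_Ioi {C : Set Ordinal} {o ξ : Ordinal} (hC : IsClubIn C o)
    (hξ : ξ < o) (ho : Order.IsSuccLimit o) : IsClubIn (C ∩ Set.Ioi ξ) o := by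
  obtain ⟨hsub, hunb, hcl⟩ := hC
  refine ⟨fun x hx => hsub hx.1, fun a ha => ?_, fun a ha hne hsup => ?_⟩
  · obtain ⟨b, hb, hab⟩ := hunb (max a (ξ + 1)) (max_lt ha (ho.succ_lt hξ))
    exact ⟨b, ⟨hb, lt_of_lt_of_le (ord_lt_add_one ξ) ((le_max_right _ _).trans hab)⟩,
      (le_max_left _ _).trans hab⟩
  · obtain ⟨y, hy⟩ := hne
    have hCa : sSup (C ∩ Set.Iio a) = a := by
      refine le_antisymm (csSup_le ⟨y, hy.1.1, hy.2⟩ fun b hb => hb.2.le) ?_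
      calc a = sSup (C ∩ Set.Ioi ξ ∩ Set.Iio a) := hsup.symm
        _ ≤ sSup (C ∩ Set.Iio a) := csSup_le_csSup
            (bddAbove_of_subset_Iio fun x hx => hx.2) ⟨y, hy⟩
            (fun x hx => ⟨hx.1.1, hx.2⟩)
    exact ⟨hcl a ha ⟨y, hy.1.1, hy.2⟩ hCa, Set.mem_Ioi.2 (lt_trans hy.1.2 hy.2)⟩

lemma isClubIn_inter {o : Ordinal} (hcof : ℵ₀ < o.cof) {C D : Set Ordinal}
    (hC : IsClubIn C o) (hD : IsClubIn D o) : IsClubIn (C ∩ D) o := by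
  have ho : Order.IsSuccLimit o := Ordinal.aleph0_le_cof.1 hcof.le
  obtain ⟨hCs, hCu, hCc⟩ := hC
  obtain ⟨hDs, hDu, hDc⟩ := hD
  refine ⟨fun x hx => hCs hx.1, fun a ha => ?_, fun a ha hne hsup => ?_⟩
  · -- unboundedness via an ω-recursion
    have hCu' : ∀ x, ∃ b, x < o → (b ∈ C ∧ x ≤ b) := by
      intro x
      by_cases hx : x < o
      · obtain ⟨b, hb⟩ := hCu x hx; exact ⟨b, fun _ => hb⟩
      · exact ⟨0, fun h => absurd h hx⟩
    have hDu' : ∀ x, ∃ b, x < o → (b ∈ D ∧ x ≤ b) := by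
      intro x
      by_cases hx : x < o
      · obtain ⟨b, hb⟩ := hDu x hx; exact ⟨b, fun _ => hb⟩
      · exact ⟨0, fun h => absurd h hx⟩
    choose eC heC using hCu'
    choose eD heD using hDu'
    set f : ℕ → Ordinal := fun n => Nat.rec (eC a) (fun n fn =>
      if n % 2 = 0 then eD (fn + 1) else eC (fn + 1)) n with hf
    have hstep : ∀ n : ℕ, f n < o ∧ f n < f (n + 1) ∧
        (if n % 2 = 0 then f (n + 1) ∈ D else f (n + 1) ∈ C) := by
      intro n
      induction n with
      | zero =>
        have h0 : f 0 < o := hCs ((heC a) ha).1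
        have h1 : f 0 + 1 < o := ho.succ_lt h0
        refine ⟨h0, ?_, ?_⟩
        · show f 0 < eD (f 0 + 1)
          exact lt_of_lt_of_le (ord_lt_add_one _) ((heD _) h1).2
        · show (if 0 % 2 = 0 then f 1 ∈ D else f 1 ∈ C)
          rw [if_pos rfl]
          exact ((heD _) h1).1
      | succ n ih =>
        obtain ⟨_, hlt, hmem⟩ := ih
        have hno : f (n + 1) < o := by
          by_cases hpar : n % 2 = 0
          · rw [if_pos hpar] at hmem; exact hDs hmem
          · rw [if_neg hpar] at hmem; exact hCs hmem
        have hso : f (n + 1) + 1 < o := ho.succ_lt hno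
        by_cases hpar : (n + 1) % 2 = 0
        · have hfe : f (n + 1 + 1) = eD (f (n + 1) + 1) := by
            show (if (n + 1) % 2 = 0 then eD (f (n + 1) + 1) else eC (f (n + 1) + 1)) = _
            rw [if_pos hpar]
          refine ⟨hno, ?_, ?_⟩
          · rw [hfe]; exact lt_of_lt_of_le (ord_lt_add_one _) ((heD _) hso).2
          · rw [if_pos hpar, hfe]; exact ((heD _) hso).1
        · have hfe : f (n + 1 + 1) = eC (f (n + 1) + 1) := by
            show (if (n + 1) % 2 = 0 then eD (f (n + 1) + 1) else eC (f (n + 1) + 1)) = _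
            rw [if_neg hpar]
          refine ⟨hno, ?_, ?_⟩
          · rw [hfe]; exact lt_of_lt_of_le (ord_lt_add_one _) ((heC _) hso).2
          · rw [if_neg hpar, hfe]; exact ((heC _) hso).1
    have hmono : StrictMono f := strictMono_nat_of_lt_succ fun n => (hstep n).2.1
    set s := ⨆ n, f n with hs
    have hbdd : BddAbove (Set.range f) := ⟨o, by rintro x ⟨n, rfl⟩; exact ((hstep n).1).le⟩
    have hso : s < o :=
      Ordinal.iSup_lt_ord_lift
        (by rw [Cardinal.mk_nat, Cardinal.lift_aleph0]; exact hcof) fun n => (hstep n).1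
    have hles : ∀ n, f n ≤ s := fun n => le_ciSup hbdd n
    have hlts : ∀ n, f n < s := fun n => lt_of_lt_of_le (hstep n).2.1 (hles (n + 1))
    have hCmem : ∀ n : ℕ, f (2 * n + 2) ∈ C := by
      intro n
      have h := (hstep (2 * n + 1)).2.2
      rw [if_neg (by omega)] at h
      exact h
    have hDmem : ∀ n : ℕ, f (2 * n + 1) ∈ D := by
      intro n
      have h := (hstep (2 * n)).2.2
      rw [if_pos (by omega)] at h
      exact h
    have hsC : s ∈ C := by
      apply hCc s hso ⟨f (2 * 0 + 2), hCmem 0, Set.mem_Iio.mpr (hlts (2 * 0 + 2))⟩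
      refine le_antisymm (csSup_le ⟨f (2 * 0 + 2), hCmem 0, Set.mem_Iio.mpr (hlts (2 * 0 + 2))⟩ fun b hb => hb.2.le) ?_
      refine le_trans (le_of_eq hs) (ciSup_le fun n => ?_)
      calc f n ≤ f (2 * n + 2) := hmono.monotone (show n ≤ 2 * n + 2 by omega)
        _ ≤ sSup (C ∩ Set.Iio s) := le_csSup (bddAbove_of_subset_Iio fun x hx => hx.2)
            ⟨hCmem n, Set.mem_Iio.mpr (hlts (2 * n + 2))⟩
    have hsD : s ∈ D := by
      apply hDc s hso ⟨f (2 * 0 + 1), hDmem 0, Set.mem_Iio.mpr (hlts (2 * 0 + 1))⟩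
      refine le_antisymm (csSup_le ⟨f (2 * 0 + 1), hDmem 0, Set.mem_Iio.mpr (hlts (2 * 0 + 1))⟩ fun b hb => hb.2.le) ?_
      refine le_trans (le_of_eq hs) (ciSup_le fun n => ?_)
      calc f n ≤ f (2 * n + 1) := hmono.monotone (show n ≤ 2 * n + 1 by omega)
        _ ≤ sSup (D ∩ Set.Iio s) := le_csSup (bddAbove_of_subset_Iio fun x hx => hx.2)
            ⟨hDmem n, Set.mem_Iio.mpr (hlts (2 * n + 1))⟩
    exact ⟨s, ⟨hsC, hsD⟩, le_trans ((heC a) ha).2 (hles 0)⟩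
  · obtain ⟨y, hy⟩ := hne
    have hCa : sSup (C ∩ Set.Iio a) = a := by
      refine le_antisymm (csSup_le ⟨y, hy.1.1, hy.2⟩ fun b hb => hb.2.le) ?_
      calc a = sSup (C ∩ D ∩ Set.Iio a) := hsup.symm
        _ ≤ sSup (C ∩ Set.Iio a) := csSup_le_csSup
            (bddAbove_of_subset_Iio fun x hx => hx.2) ⟨y, hy⟩
            (fun x hx => ⟨hx.1.1, hx.2⟩)
    have hDa : sSup (D ∩ Set.Iio a) = a := by
      refine le_antisymm (csSup_le ⟨y, hy.1.2, hy.2⟩ fun b hb => hb.2.le) ?_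
      calc a = sSup (C ∩ D ∩ Set.Iio a) := hsup.symm
        _ ≤ sSup (D ∩ Set.Iio a) := csSup_le_csSup
            (bddAbove_of_subset_Iio fun x hx => hx.2) ⟨y, hy⟩
            (fun x hx => ⟨hx.1.2, hx.2⟩)
    exact ⟨hCc a ha ⟨y, hy.1.1, hy.2⟩ hCa, hDc a ha ⟨y, hy.1.2, hy.2⟩ hDa⟩

/-- Every ordinal of uncountable cofinality has a club that is covered by the image of
`Iio (cof α).ord` under some function. -/
lemma exists_small_club (α : Ordinal) (hcof : ℵ₀ < α.cof) :
    ∃ g : Ordinal → Ordinal, IsClubIn (g '' Set.Iio α.cof.ord) α := by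
  have hαlim : Order.IsSuccLimit α := Ordinal.aleph0_le_cof.1 hcof.le
  obtain ⟨f, hf⟩ := Ordinal.exists_fundamental_sequence α
  have hordlim : Order.IsSuccLimit α.cof.ord := Cardinal.isSuccLimit_ord (aleph0_le_cof.2 hαlim)
  have hflt : ∀ j (hj : j < α.cof.ord), f j hj < α := fun j hj => by
    have := Ordinal.lt_blsub (fun b hb => f b hb) j hj
    rwa [hf.blsub_eq] at this
  set F : Ordinal → Ordinal := fun j => if h : j < α.cof.ord then f j h + 1 else 0 with hF
  set g : Ordinal → Ordinal := fun i => sSup (F '' Set.Iio i) with hg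
  have hFbdd : ∀ s : Set Ordinal, BddAbove (F '' s) := by
    intro s
    refine ⟨α, ?_⟩
    rintro x ⟨j, _, rfl⟩
    by_cases hj : j < α.cof.ord
    · rw [hF]; simp only [dif_pos hj]
      rw [Ordinal.add_one_eq_succ, Order.succ_le_iff]
      exact hflt j hj
    · rw [hF]; simp only [dif_neg hj]; exact zero_le (a := α)
  have hgmono : ∀ {i i'}, i ≤ i' → g i ≤ g i' := by
    intro i i' h
    rcases (F '' Set.Iio i).eq_empty_or_nonempty with he | hne
    · rw [hg]; simp only; rw [he, csSup_empty]; exact zero_le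
    · exact csSup_le_csSup (hFbdd _) hne (Set.image_mono fun x hx => lt_of_lt_of_le hx h)
  have hglt : ∀ i < α.cof.ord, g i < α := by
    intro i hi
    refine lt_of_le_of_lt (csSup_le' ?_) (hflt i hi)
    rintro x ⟨j, hj, rfl⟩
    have hjα.cof.ord : j < α.cof.ord := lt_trans hj hi
    rw [hF]; simp only [dif_pos hjα.cof.ord]
    rw [Ordinal.add_one_eq_succ, Order.succ_le_iff]
    exact hf.2.1 hjα.cof.ord hi hj
  refine ⟨g, fun x => ?_, fun a ha => ?_, fun a ha hne hsup => ?_⟩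
  · rintro ⟨i, hi, rfl⟩
    exact hglt i hi
  · -- unbounded
    have : a < Ordinal.blsub α.cof.ord (fun b hb => f b hb) := by rw [hf.blsub_eq]; exact ha
    obtain ⟨i, hi, hai⟩ := Ordinal.lt_blsub_iff.1 this
    have hi1 : i + 1 < α.cof.ord := hordlim.succ_lt hi
    refine ⟨g (i + 1), ⟨i + 1, hi1, rfl⟩, ?_⟩
    have hFi : F i = f i hi + 1 := by rw [hF]; simp only [dif_pos hi]
    have h2 : F i ≤ g (i + 1) := le_csSup (hFbdd _) ⟨i, ord_lt_add_one i, rfl⟩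
    rw [hFi] at h2
    exact le_trans (le_trans hai (ord_lt_add_one _).le) h2
  · -- closed
    set I : Set Ordinal := {i | i < α.cof.ord ∧ g i < a} with hI
    obtain ⟨b, ⟨i₀, hi₀α.cof.ord, rfl⟩, hb⟩ := hne
    have hIne : I.Nonempty := ⟨i₀, hi₀α.cof.ord, hb⟩
    have hIbdd : BddAbove I := ⟨α.cof.ord, fun i hi => hi.1.le⟩
    set i' := sSup I with hi'
    have hi'α.cof.ord : i' ≤ α.cof.ord := csSup_le hIne fun i hi => hi.1.le
    have hFlt : ∀ j < i', F j < a := by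
      intro j hj
      obtain ⟨i, hiI, hji⟩ : ∃ i ∈ I, j < i := by
        by_contra hcon
        push_neg at hcon
        exact absurd (csSup_le hIne hcon) (not_le.2 hj)
      exact lt_of_le_of_lt (le_csSup (hFbdd _) ⟨j, hji, rfl⟩) hiI.2
    have hgi'le : g i' ≤ a := csSup_le' (by rintro x ⟨j, hj, rfl⟩; exact (hFlt j hj).le)
    rcases lt_or_eq_of_le hi'α.cof.ord with hlt | heq
    · by_cases hga : g i' < a
      · exfalso
        have : sSup (g '' Set.Iio α.cof.ord ∩ Set.Iio a) ≤ g i' := by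
          refine csSup_le ⟨g i₀, ⟨i₀, hi₀α.cof.ord, rfl⟩, hb⟩ ?_
          rintro x ⟨⟨i, hiα.cof.ord, rfl⟩, hxa⟩
          exact hgmono (le_csSup hIbdd ⟨hiα.cof.ord, hxa⟩)
        rw [hsup] at this
        exact absurd (lt_of_le_of_lt this hga) (lt_irrefl a)
      · exact ⟨i', hlt, le_antisymm hgi'le (not_lt.1 hga)⟩
    · exfalso
      have : Ordinal.blsub α.cof.ord (fun b hb => f b hb) ≤ a := by
        apply Ordinal.blsub_le_iff.2
        intro j hj
        have := hFlt j (by rw [heq]; exact hj)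
        rw [hF] at this; simp only [dif_pos hj] at this
        exact lt_of_le_of_lt (le_of_lt (ord_lt_add_one _)) this
      rw [hf.blsub_eq] at this
      exact absurd ha (not_lt.2 this)

/-- The tree of 0/1-sequences with at most one `1`. -/
def Tfin (κ : Cardinal) : Set TSeq :=
  {f | ∃ β < κ.ord, (∀ o, f o ≠ none ↔ o < β) ∧ (∀ o v, f o = some v → v ≤ 1) ∧
    (∀ o₁ o₂, f o₁ = some 1 → f o₂ = some 1 → o₁ = o₂)}

lemma val01 {κ : Cardinal} {x : TSeq} (hx : x ∈ Tfin κ) {o : Ordinal}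
    (ho : x o ≠ none) : x o = some 0 ∨ x o = some 1 := by
  obtain ⟨β, hβ, hdom, hval, hone⟩ := hx
  obtain ⟨v, hv⟩ := Option.ne_none_iff_exists'.1 ho
  rcases Ordinal.le_one_iff.1 (hval o v hv) with h0 | h1
  · left; rw [hv, h0]
  · right; rw [hv, h1]

lemma one_unique {κ : Cardinal} {x : TSeq} (hx : x ∈ Tfin κ) {o₁ o₂ : Ordinal}
    (h₁ : x o₁ = some 1) (h₂ : x o₂ = some 1) : o₁ = o₂ := by
  obtain ⟨β, _, _, _, hone⟩ := hx
  exact hone _ _ h₁ h₂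

lemma Tfin_streamlined (κ : Cardinal) (hκ : ℵ₀ ≤ κ) : IsStreamlined κ (Tfin κ) := by
  have hω : (1 : Ordinal) < κ.ord := by
    refine lt_of_lt_of_le Ordinal.one_lt_omega0 ?_
    rw [← Cardinal.ord_aleph0]; exact Cardinal.ord_le_ord.2 hκ
  have hordlim : Order.IsSuccLimit κ.ord := Cardinal.isSuccLimit_ord hκ
  constructor
  · -- downward
    rintro f ⟨β, hβ, hdom, hval, hone⟩ β'
    rcases le_or_gt β β' with h | h
    · have heq : tres f β' = f := by
        funext o
        unfold tres
        split
        · rfl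
        · rename_i ho
          by_contra hc
          exact ho (lt_of_lt_of_le ((hdom o).1 fun hn => hc hn.symm) h)
      rw [heq]
      exact ⟨β, hβ, hdom, hval, hone⟩
    · refine ⟨β', lt_trans h hβ, fun o => ?_, fun o v hv => ?_, fun o₁ o₂ h₁ h₂ => ?_⟩
      · unfold tres
        split
        · rename_i ho
          simp only [ho, iff_true]
          exact (hdom o).2 (lt_trans ho h)
        · rename_i ho
          simpa using ho
      · revert hv; unfold tres; split
        · exact hval o v
        · intro hv; exact absurd hv (by simp)
      · have e₁ : f o₁ = some 1 := by
          revert h₁; unfold tres; split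
          · exact id
          · intro hc; exact absurd hc (by simp)
        have e₂ : f o₂ = some 1 := by
          revert h₂; unfold tres; split
          · exact id
          · intro hc; exact absurd hc (by simp)
        exact hone o₁ o₂ e₁ e₂
  · -- bounded
    rintro f hf
    obtain ⟨β, hβ, hdom, hval, hone⟩ := hf
    exact ⟨β, hβ, ⟨β, hβ, hdom, hval, hone⟩, hdom⟩
  · -- values
    rintro f ⟨β, hβ, hdom, hval, hone⟩ o v hv
    exact lt_of_le_of_lt (hval o v hv) hω
  · -- level_ne
    intro α hα
    refine ⟨fun o => if o < α then some 0 else none, ⟨α, hα, fun o => ?_, fun o v hv => ?_,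
      fun o₁ o₂ h₁ h₂ => ?_⟩, fun o => ?_⟩
    · dsimp only; split <;> simp_all
    · revert hv; dsimp only; split
      · intro hv
        rw [(Option.some_inj.1 hv).symm]
        exact zero_le_one
      · intro hv; exact absurd hv (by simp)
    · revert h₁; dsimp only; split
      · intro hv; exact absurd (Option.some_inj.1 hv) zero_ne_one
      · intro hv; exact absurd hv (by simp)
    · dsimp only; split <;> simp_all
  · -- level_small
    intro α hα
    classical
    have hmem : ∀ f : ↥(tlevel (Tfin κ) α), ∀ o, (h : (f : TSeq) o = some 1) → o < α :=
      fun f o h => (f.2.2 o).1 (by rw [h]; simp)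
    set F : ↥(tlevel (Tfin κ) α) → ↥(Set.Iio (α + 1)) := fun f =>
      if h : ∃ o, (f : TSeq) o = some 1 then
        ⟨h.choose + 1, by
          have := hmem f h.choose h.choose_spec
          rw [Set.mem_Iio, Ordinal.add_one_eq_succ, Ordinal.add_one_eq_succ]
          exact Order.succ_lt_succ this⟩
      else ⟨0, Set.mem_Iio.2 (lt_of_le_of_lt (zero_le (a := α)) (ord_lt_add_one α))⟩ with hF
    have hinj : Function.Injective F := by
      intro x y hxy
      by_cases hx : ∃ o, (x : TSeq) o = some 1
      · by_cases hy : ∃ o, (y : TSeq) o = some 1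
        · have : hx.choose + 1 = hy.choose + 1 := by
            simpa only [hF, dif_pos hx, dif_pos hy, Subtype.mk.injEq] using hxy
          have hcc : hx.choose = hy.choose := by
            rwa [Ordinal.add_one_eq_succ, Ordinal.add_one_eq_succ, Order.succ_eq_succ_iff] at this
          apply Subtype.ext
          funext o
          by_cases ho : o < α
          · have hxo := val01 x.2.1 ((x.2.2 o).2 ho)
            have hyo := val01 y.2.1 ((y.2.2 o).2 ho)
            rcases hxo with hx0 | hx1
            · rcases hyo with hy0 | hy1
              · rw [hx0, hy0]
              · exfalso
                have hoc : o = hy.choose := one_unique y.2.1 hy1 hy.choose_spec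
                rw [← hcc] at hoc
                have hxeq : (x : TSeq) o = some 1 := by rw [hoc]; exact hx.choose_spec
                rw [hx0] at hxeq
                exact zero_ne_one (Option.some_inj.1 hxeq)
            · have hoc : o = hx.choose := one_unique x.2.1 hx1 hx.choose_spec
              rw [hcc] at hoc
              have hyeq : (y : TSeq) o = some 1 := by rw [hoc]; exact hy.choose_spec
              rw [hx1, hyeq]
          · have hx0 : (x : TSeq) o = none := by
              by_contra hc
              exact ho ((x.2.2 o).1 hc)
            have hy0 : (y : TSeq) o = none := by
              by_contra hc
              exact ho ((y.2.2 o).1 hc)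
            rw [hx0, hy0]
        · exfalso
          simp only [hF, dif_pos hx, dif_neg hy, Subtype.mk.injEq] at hxy
          rw [Ordinal.add_one_eq_succ] at hxy
          exact (Order.succ_ne_bot _ : Order.succ hx.choose ≠ 0) hxy
      · by_cases hy : ∃ o, (y : TSeq) o = some 1
        · exfalso
          simp only [hF, dif_neg hx, dif_pos hy, Subtype.mk.injEq] at hxy
          rw [Ordinal.add_one_eq_succ] at hxy
          exact (Order.succ_ne_bot _ : Order.succ hy.choose ≠ 0) hxy.symm
        · apply Subtype.ext
          funext o
          by_cases ho : o < α
          · have hxo := val01 x.2.1 ((x.2.2 o).2 ho)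
            have hyo := val01 y.2.1 ((y.2.2 o).2 ho)
            rcases hxo with hx0 | hx1
            · rcases hyo with hy0 | hy1
              · rw [hx0, hy0]
              · exact absurd ⟨o, hy1⟩ hy
            · exact absurd ⟨o, hx1⟩ hx
          · have hx0 : (x : TSeq) o = none := by
              by_contra hc
              exact ho ((x.2.2 o).1 hc)
            have hy0 : (y : TSeq) o = none := by
              by_contra hc
              exact ho ((y.2.2 o).1 hc)
            rw [hx0, hy0]
    calc #(tlevel (Tfin κ) α) ≤ #(Set.Iio (α + 1)) := Cardinal.mk_le_of_injective hinj
      _ = Cardinal.lift.{1} (α + 1).card := Ordinal.mk_Iio_ordinal (α + 1)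
      _ < Cardinal.lift.{1} κ := by
          rw [Cardinal.lift_lt]
          exact Cardinal.lt_ord.1 (hordlim.succ_lt hα)

/-- The characteristic sequence with a single `1` at `ξ`, of length `α`. -/
def chi (α ξ : Ordinal) : TSeq :=
  fun o => if o < α then (if o = ξ then some 1 else some 0) else none

lemma chi_mem {κ : Cardinal} {α ξ : Ordinal} (hα : α < κ.ord) (hξ : ξ < α) :
    chi α ξ ∈ tlevel (Tfin κ) α := by
  have hdom : ∀ o, chi α ξ o ≠ none ↔ o < α := by
    intro o; unfold chi; split
    · rename_i ho
      simp only [ho, iff_true]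
      split <;> simp
    · rename_i ho; simpa using ho
  have hone : ∀ o, chi α ξ o = some 1 → o = ξ := by
    intro o h
    revert h; unfold chi; split
    · split
      · rename_i h'; intro _; exact h'
      · intro h; exact absurd (Option.some_inj.1 h) zero_ne_one
    · intro h; exact absurd h (by simp)
  refine ⟨⟨α, hα, hdom, ?_, fun o₁ o₂ h₁ h₂ => (hone o₁ h₁).trans (hone o₂ h₂).symm⟩, hdom⟩
  · intro o v hv
    revert hv; unfold chi; split
    · split
      · intro hv; rw [← Option.some_inj.1 hv]
      · intro hv; rw [← Option.some_inj.1 hv]; exact zero_le_one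
    · intro hv; exact absurd hv (by simp)

lemma chi_self {α ξ : Ordinal} (hξ : ξ < α) : chi α ξ ξ = some 1 := by
  unfold chi; rw [if_pos hξ, if_pos rfl]

lemma chi_other {α ξ o : Ordinal} (ho : o < α) (hne : o ≠ ξ) : chi α ξ o = some 0 := by
  unfold chi; rw [if_pos ho, if_neg hne]

lemma card_eq_cof_of_guess (κ : Cardinal) (f_ : Ordinal → TSeq) (α : Ordinal)
    (hα : α < κ.ord) (hcof : ℵ₀ < α.cof)
    (H : ∀ f ∈ tlevel (Tfin κ) α,
      StatIn {β | β ∈ Set.Iio κ.ord ∧ β < α ∧ tres f β = f_ β} α) :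
    α.card = α.cof := by
  refine le_antisymm ?_ (Ordinal.cof_le_card α)
  have hαlim : Order.IsSuccLimit α := Ordinal.aleph0_le_cof.1 hcof.le
  obtain ⟨g, hclub⟩ := exists_small_club α hcof
  have key : ∀ ξ : ↥(Set.Iio α), ∃ i : ↥(Set.Iio α.cof.ord),
      tres (chi α ξ) (g i) = f_ (g i) ∧ (ξ : Ordinal) < g i := by
    rintro ⟨ξ, hξ⟩
    have hstat := H (chi α ξ) (chi_mem hα hξ)
    obtain ⟨β, ⟨_, _, hguess⟩, hβC, hβξ⟩ := hstat _ (isClubIn_inter_Ioi hclub hξ hαlim)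
    obtain ⟨i, hi, hgi⟩ := hβC
    exact ⟨⟨i, hi⟩, by rw [hgi]; exact hguess, by rw [hgi]; exact hβξ⟩
  choose Φ h1 h2 using key
  have hΦinj : Function.Injective Φ := by
    intro ξ₁ ξ₂ h
    have e : tres (chi α ξ₁) (g (Φ ξ₁)) = tres (chi α ξ₂) (g (Φ ξ₁)) := by
      rw [h1 ξ₁, h, ← h1 ξ₂]
    have hev := congrFun e (ξ₁ : Ordinal)
    apply Subtype.ext
    by_contra hne
    unfold tres at hev
    rw [if_pos (h2 ξ₁)] at hev
    rw [if_pos (h2 ξ₁)] at hev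
    rw [chi_self ξ₁.2, chi_other ξ₁.2 hne] at hev
    exact one_ne_zero (Option.some_inj.1 hev)
  have hle := Cardinal.mk_le_of_injective hΦinj
  rw [Ordinal.mk_Iio_ordinal, Ordinal.mk_Iio_ordinal, Cardinal.lift_le, Cardinal.card_ord]
    at hle
  exact hle
/-- If `◇_S(κ-trees)` holds for a stationary `S ⊆ E^κ_{>ω}`, then `κ` is
either a Mahlo cardinal (the regular cardinals below `κ` are stationary in
`κ`) or the successor of a regular uncountable cardinal. -/
theorem diamond_trees_implies_mahlo_or_succ_regular
    (κ : Cardinal) (hreg : κ.IsRegular) (hunc : ℵ₀ < κ)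
    (S : Set Ordinal)
    (hSsub : S ⊆ {o | o < κ.ord ∧ ℵ₀ < o.cof}) (hSstat : StatIn S κ.ord)
    (f_ : Ordinal → TSeq)
    (hwit : DiamondTreesWitness κ S (Set.Iio κ.ord) f_) :
    StatIn {o : Ordinal | o.card.ord = o ∧ o.card.IsRegular} κ.ord ∨
      ∃ lam : Cardinal, lam.IsRegular ∧ ℵ₀ < lam ∧ κ = Order.succ lam := by

  have hκord : Order.IsSuccLimit κ.ord := Cardinal.isSuccLimit_ord hreg.1
  have hT := Tfin_streamlined κ hreg.1
  by_cases hsucc : ∃ μ : Cardinal, κ = Order.succ μ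
  · right
    obtain ⟨μ, hμ⟩ := hsucc
    have hμκ : μ < κ := hμ ▸ Order.lt_succ μ
    have hclub := isClubIn_Ioo (Cardinal.ord_lt_ord.2 hμκ) hκord
    obtain ⟨α, ⟨hαS, hguess⟩, hμα, hακ⟩ := hwit (Tfin κ) hT _ hclub
    obtain ⟨hακ', hαcof⟩ := hSsub hαS
    have hcore := card_eq_cof_of_guess κ f_ α hακ' hαcof hguess
    have hcard : α.card = μ := by
      apply le_antisymm
      · have h1 := Cardinal.lt_ord.1 hακ'
        rw [hμ] at h1
        exact Order.lt_succ_iff.1 h1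
      · calc μ = μ.ord.card := (Cardinal.card_ord μ).symm
          _ ≤ α.card := Ordinal.card_le_card hμα.le
    have hαlim : Order.IsSuccLimit α := Ordinal.aleph0_le_cof.1 hαcof.le
    have hμcof : μ = α.cof := by rw [← hcard, hcore]
    refine ⟨μ, ?_, ?_, hμ⟩
    · rw [hμcof]
      exact Cardinal.isRegular_cof hαlim
    · rw [hμcof]
      exact hαcof
  · left
    intro D hD
    have hCardclub : IsClubIn {o : Ordinal | o < κ.ord ∧ o.card.ord = o} κ.ord := by
      refine ⟨fun x hx => hx.1, fun a ha => ?_, fun a ha hne hsup => ?_⟩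
      · refine ⟨(Order.succ a.card).ord, ⟨?_, by rw [Cardinal.card_ord]⟩, ?_⟩
        · apply Cardinal.ord_lt_ord.2
          have hle : Order.succ a.card ≤ κ := Order.succ_le_of_lt (Cardinal.lt_ord.1 ha)
          rcases lt_or_eq_of_le hle with h | h
          · exact h
          · exact absurd ⟨a.card, h.symm⟩ hsucc
        · exact (Cardinal.lt_ord.2 (Order.lt_succ a.card)).le
      · refine ⟨ha, ?_⟩
        refine le_antisymm (Cardinal.ord_card_le a) ?_
        calc a = sSup ({o : Ordinal | o < κ.ord ∧ o.card.ord = o} ∩ Set.Iio a) := hsup.symm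
          _ ≤ a.card.ord := csSup_le hne fun x hx => by
              rw [← hx.1.2]
              exact Cardinal.ord_le_ord.2 (Ordinal.card_le_card hx.2.le)
    have hDC := isClubIn_inter (by rw [hreg.cof_eq]; exact hunc) hD hCardclub
    obtain ⟨α, ⟨hαS, hguess⟩, hαD, hακlt, hαcard⟩ := hwit (Tfin κ) hT _ hDC
    obtain ⟨hακ', hαcof⟩ := hSsub hαS
    have hcore := card_eq_cof_of_guess κ f_ α hακ' hαcof hguess
    refine ⟨α, ⟨hαcard, ?_, ?_⟩, hαD⟩
    · exact le_of_lt (lt_of_lt_of_le hαcof (Ordinal.cof_le_card α))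
    · rw [hαcard, ← hcore]

end
end

section
/- Every subtle cardinal is a strong limit cardinal. -/
open Cardinal Ordinal Set

noncomputable section

/-- `κ` is subtle: for every sequence `⟨A_β ⊆ β : β ∈ D⟩` over a club `D ⊆ κ`,
there are `β < α` in `D` with `A_β = A_α ∩ β`. -/
def IsSubtle (κ : Cardinal) : Prop :=
  ∀ (A : Ordinal → Set Ordinal) (D : Set Ordinal), IsClubIn D κ.ord →
    (∀ β ∈ D, A β ⊆ Set.Iio β) →
    ∃ β ∈ D, ∃ α ∈ D, β < α ∧ A β = A α ∩ Set.Iio β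

/-- Every subtle cardinal is a strong limit cardinal. -/
theorem subtle_isStrongLimit
    (κ : Cardinal) (hreg : κ.IsRegular) (hunc : ℵ₀ < κ) (hsub : IsSubtle κ) :
    κ.IsStrongLimit := by
  refine ⟨hreg.pos.ne', fun c hc => ?_⟩
  by_contra hle
  push_neg at hle
  set μ : Ordinal := c.ord with hμ
  have hμκ : μ < κ.ord := (Cardinal.ord_lt_ord).2 hc
  have hlim : Order.IsSuccLimit κ.ord := Cardinal.isSuccLimit_ord hunc.le
  obtain ⟨f⟩ : Nonempty ((Iio κ.ord) ↪ Set (Iio μ)) := by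
    rw [← Cardinal.le_def, Cardinal.mk_set, Ordinal.mk_Iio_ordinal,
      Ordinal.mk_Iio_ordinal, Cardinal.card_ord, Cardinal.card_ord,
      ← Cardinal.lift_two_power]
    exact Cardinal.lift_le.2 hle
  set A : Ordinal → Set Ordinal := fun β =>
    if h : β < κ.ord then Subtype.val '' (f ⟨β, h⟩) else ∅ with hA
  set D : Set Ordinal := Ioo μ κ.ord with hD
  have hAsub : ∀ β, A β ⊆ Iio μ := by
    intro β x hx
    simp only [hA] at hx
    split at hx
    · obtain ⟨y, _, rfl⟩ := hx; exact y.2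
    · exact absurd hx (notMem_empty x)
  have hclub : IsClubIn D κ.ord := by
    refine ⟨fun a ha => ha.2, fun a ha => ?_, fun a ha hne _ => ?_⟩
    · refine ⟨max a (μ + 1), ⟨?_, ?_⟩, le_max_left _ _⟩
      · exact lt_of_lt_of_le (Order.lt_succ μ) (le_max_right _ _)
      · exact max_lt ha (hlim.succ_lt hμκ)
    · obtain ⟨b, hbD, hba⟩ := hne
      exact ⟨lt_trans hbD.1 hba, ha⟩
  obtain ⟨β, hβ, α, hα, hβα, heq⟩ := hsub A D hclub
    (fun β hβ => (hAsub β).trans (Iio_subset_Iio hβ.1.le))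
  have hAα : A α ∩ Iio β = A α :=
    inter_eq_left.2 ((hAsub α).trans (Iio_subset_Iio hβ.1.le))
  rw [hAα] at heq
  simp only [hA, dif_pos hβ.2, dif_pos hα.2] at heq
  have := f.injective (Set.image_injective.2 Subtype.val_injective heq)
  exact absurd (congrArg Subtype.val this) hβα.ne

end
end

section
/- If κ is a subtle cardinal, then there exists a stationary set S ⊆ E^κ_{>ω} and a sequence ⟨X_β : β < κ⟩ with X_β ⊆ β, such that for every α ∈ S and every Y ⊆ α, the set {β < α : X_β = Y ∩ β} is stationary in α. -/
open Cardinal Ordinal Set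

noncomputable section

namespace SubtleGuess

open scoped Classical

/-! ### Arithmetic facts about `2 * ξ` -/

theorem le_two_mul (ξ : Ordinal) : ξ ≤ 2 * ξ := by
  simpa using mul_le_mul_left (show (1 : Ordinal) ≤ 2 by norm_num) ξ

theorem two_mul_lt_two_mul {ξ ζ : Ordinal} (h : ξ < ζ) : 2 * ξ < 2 * ζ :=
  (mul_lt_mul_iff_right₀ (show (0:Ordinal) < 2 by norm_num)).2 h

theorem two_mul_inj {ξ ζ : Ordinal} (h : 2 * ξ = 2 * ζ) : ξ = ζ := by
  rcases lt_trichotomy ξ ζ with hc | hc | hc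
  · exact absurd h (two_mul_lt_two_mul hc).ne
  · exact hc
  · exact absurd h.symm (two_mul_lt_two_mul hc).ne

theorem add_one_le_of_lt {a b : Ordinal} (h : a < b) : a + 1 ≤ b := by
  rw [Ordinal.add_one_eq_succ]
  exact Order.succ_le_of_lt h

theorem lt_add_one_self (a : Ordinal) : a < a + 1 := by
  rw [Ordinal.add_one_eq_succ]
  exact Order.lt_succ _

theorem lt_add_two (x : Ordinal) : x < x + 2 := by
  have h : x + 2 = (x + 1) + 1 := by rw [add_assoc]; norm_num
  rw [h]
  exact (lt_add_one_self x).trans (lt_add_one_self _)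

theorem two_mul_ne {ξ ζ : Ordinal} : 2 * ξ ≠ 2 * ζ + 1 := by
  intro h
  have h1 : 2 * ζ < 2 * ξ := by rw [h]; exact lt_add_one_self _
  have h2 : ζ < ξ := (mul_lt_mul_iff_right₀ (show (0:Ordinal) < 2 by norm_num)).1 h1
  have h3 : 2 * (ζ + 1) ≤ 2 * ξ := mul_le_mul_right (add_one_le_of_lt h2) 2
  rw [mul_add, mul_one, h] at h3
  have : (2 : Ordinal) ≤ 1 := (add_le_add_iff_left (2 * ζ)).1 h3
  norm_num at this

/-! ### Coding a pair of sets as one set -/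

def enc (Y C : Set Ordinal) : Set Ordinal :=
  (fun ξ => 2 * ξ) '' Y ∪ (fun ξ => 2 * ξ + 1) '' C

theorem two_mul_mem_enc {Y C : Set Ordinal} {ξ : Ordinal} : 2 * ξ ∈ enc Y C ↔ ξ ∈ Y := by
  constructor
  · rintro (⟨ζ, hζ, h⟩ | ⟨ζ, hζ, h⟩)
    · rwa [← two_mul_inj h]
    · exact absurd h.symm two_mul_ne
  · exact fun h => Or.inl ⟨ξ, h, rfl⟩

theorem odd_lt_odd {ξ ζ : Ordinal} (h : ξ < ζ) : 2 * ξ + 1 < 2 * ζ + 1 :=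
  lt_of_le_of_lt (add_one_le_of_lt (two_mul_lt_two_mul h)) (lt_add_one_self _)

theorem odd_inj {ξ ζ : Ordinal} (h : 2 * ξ + 1 = 2 * ζ + 1) : ξ = ζ := by
  rcases lt_trichotomy ξ ζ with hc | hc | hc
  · exact absurd h (odd_lt_odd hc).ne
  · exact hc
  · exact absurd h.symm (odd_lt_odd hc).ne

theorem odd_mem_enc {Y C : Set Ordinal} {ξ : Ordinal} : 2 * ξ + 1 ∈ enc Y C ↔ ξ ∈ C := by
  constructor
  · rintro (⟨ζ, hζ, h⟩ | ⟨ζ, hζ, h⟩)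
    · exact absurd h two_mul_ne
    · rwa [← odd_inj h]
  · exact fun h => Or.inr ⟨ξ, h, rfl⟩

theorem enc_inj {Y₁ C₁ Y₂ C₂ : Set Ordinal} (h : enc Y₁ C₁ = enc Y₂ C₂) :
    Y₁ = Y₂ ∧ C₁ = C₂ := by
  constructor
  · ext ξ
    rw [← two_mul_mem_enc (C := C₁), h, two_mul_mem_enc]
  · ext ξ
    rw [← odd_mem_enc (Y := Y₁), h, odd_mem_enc]

/-- Closure points of the coding. -/
def Cl (α : Ordinal) : Prop := 0 < α ∧ ∀ ξ < α, 2 * ξ + 1 < α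

theorem Cl.two_mul_lt {α ξ : Ordinal} (h : Cl α) (hξ : ξ < α) : 2 * ξ < α :=
  (lt_add_one_self (2 * ξ)).trans (h.2 ξ hξ)

theorem Cl.succ_lt {α ξ : Ordinal} (h : Cl α) (hξ : ξ < α) : ξ + 1 < α :=
  lt_of_le_of_lt (add_le_add_left (le_two_mul ξ) 1) (h.2 ξ hξ)

theorem Cl.isLimit {α : Ordinal} (h : Cl α) : Order.IsSuccLimit α := by
  rw [Ordinal.isSuccLimit_iff, Order.isSuccPrelimit_iff_succ_lt]
  refine ⟨h.1.ne', fun a ha => ?_⟩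
  rw [← Ordinal.add_one_eq_succ]
  exact h.succ_lt ha

theorem enc_inter {Y C : Set Ordinal} {β : Ordinal} (hβ : Cl β) :
    enc Y C ∩ Set.Iio β = enc (Y ∩ Set.Iio β) (C ∩ Set.Iio β) := by
  ext x
  constructor
  · rintro ⟨(⟨ζ, hζ, rfl⟩ | ⟨ζ, hζ, rfl⟩), hx⟩
    · exact Or.inl ⟨ζ, ⟨hζ, lt_of_le_of_lt (le_two_mul ζ) hx⟩, rfl⟩
    · exact Or.inr ⟨ζ, ⟨hζ, lt_of_le_of_lt ((le_two_mul ζ).trans le_self_add) hx⟩, rfl⟩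
  · rintro (⟨ζ, ⟨hζ, hζβ⟩, rfl⟩ | ⟨ζ, ⟨hζ, hζβ⟩, rfl⟩)
    · exact ⟨Or.inl ⟨ζ, hζ, rfl⟩, hβ.two_mul_lt hζβ⟩
    · exact ⟨Or.inr ⟨ζ, hζ, rfl⟩, hβ.2 ζ hζβ⟩

theorem enc_subset {Y C : Set Ordinal} {α : Ordinal} (hα : Cl α)
    (hY : Y ⊆ Set.Iio α) (hC : C ⊆ Set.Iio α) : enc Y C ⊆ Set.Iio α := by
  rintro x (⟨ζ, hζ, rfl⟩ | ⟨ζ, hζ, rfl⟩)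
  · exact hα.two_mul_lt (hY hζ)
  · exact hα.2 ζ (hC hζ)

/-! ### The recursively-defined guessing sequence -/

def CexProp (X : Ordinal → Set Ordinal) (α : Ordinal) (Y C : Set Ordinal) : Prop :=
  Y ⊆ Set.Iio α ∧ IsClubIn C α ∧ ∀ β, β < α → β ∈ C → X β ≠ Y ∩ Set.Iio β

def XS : Ordinal → Set Ordinal :=
  Ordinal.lt_wf.fix fun α ih =>
    if h : ∃ Y C : Set Ordinal, Y ⊆ Set.Iio α ∧ IsClubIn C α ∧
        ∀ β, ∀ hb : β < α, β ∈ C → ih β hb ≠ Y ∩ Set.Iio β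
    then h.choose else ∅

theorem XS_eq (α : Ordinal) :
    XS α = if h : ∃ Y C, CexProp XS α Y C then h.choose else ∅ := by
  show Ordinal.lt_wf.fix _ α = _
  rw [WellFounded.fix_eq]
  rfl

def Bad (α : Ordinal) : Prop := ∃ Y C, CexProp XS α Y C

theorem XS_subset (α : Ordinal) : XS α ⊆ Set.Iio α := by
  rw [XS_eq]
  split
  · next h => exact h.choose_spec.choose_spec.1
  · exact empty_subset _

theorem bad_self {α : Ordinal} (h : Bad α) : ∃ C, CexProp XS α (XS α) C := by
  have h' : ∃ Y C, CexProp XS α Y C := h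
  rw [XS_eq, dif_pos h']
  exact h'.choose_spec

/-! ### ω-sequences -/

def OmegaSeq (α : Ordinal) (f : ℕ → Ordinal) : Prop :=
  StrictMono f ∧ (∀ n, f n < α) ∧ ∀ a < α, ∃ n, a ≤ f n

def monoSeq (g : ℕ → Ordinal) : ℕ → Ordinal
  | 0 => g 0
  | n + 1 => max (g (n + 1)) (monoSeq g n + 1)

theorem exists_omegaSeq {α : Ordinal} (hα : Order.IsSuccLimit α) (hc : α.cof = ℵ₀) :
    ∃ f, OmegaSeq α f := by
  obtain ⟨ι, f, hlsub, hcard⟩ := Ordinal.exists_lsub_cof α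
  rw [hc] at hcard
  obtain ⟨e⟩ := Cardinal.eq.1 (hcard.trans (Cardinal.mk_denumerable (ULift ℕ)).symm)
  set g : ℕ → Ordinal := fun n => f (e.symm ⟨n⟩) with hgdef
  have hglt : ∀ n : ℕ, g n < α := fun n => hlsub ▸ Ordinal.lt_lsub f _
  have hgcof : ∀ a < α, ∃ n : ℕ, a ≤ g n := by
    intro a ha
    rw [← hlsub] at ha
    obtain ⟨i, hi⟩ := Ordinal.lt_lsub_iff.1 ha
    refine ⟨(e i).down, ?_⟩
    simp only [hgdef]
    rw [show (⟨(e i).down⟩ : ULift ℕ) = e i from rfl, e.symm_apply_apply]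
    exact hi
  refine ⟨monoSeq g, strictMono_nat_of_lt_succ fun n => ?_, ?_, fun a ha => ?_⟩
  · exact lt_of_lt_of_le (lt_add_one_self _) (le_max_right _ _)
  · intro n
    induction n with
    | zero => exact hglt 0
    | succ n ih =>
        refine max_lt (hglt (n + 1)) ?_
        rw [Ordinal.add_one_eq_succ]
        exact hα.succ_lt ih
  · obtain ⟨n, hn⟩ := hgcof a ha
    refine ⟨n, hn.trans ?_⟩
    cases n with
    | zero => exact le_rfl
    | succ n => exact le_max_left _ _

theorem omegaSeq_discrete {α β : Ordinal} {g : ℕ → Ordinal} (hg : OmegaSeq α g)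
    (hβα : β < α) (hβ : Cl β)
    (hunb : ∀ a < β, ∃ b ∈ Set.range g ∩ Set.Iio β, a ≤ b) : False := by
  have hex : ∃ n, β ≤ g n := hg.2.2 β hβα
  cases hn : Nat.find hex with
  | zero =>
      have h0 : β ≤ g 0 := hn ▸ Nat.find_spec hex
      obtain ⟨b, ⟨⟨m, rfl⟩, hbβ⟩, -⟩ := hunb 0 hβ.1
      exact absurd (hbβ.trans_le (h0.trans (hg.1.monotone (Nat.zero_le m)))) (lt_irrefl _)
  | succ k =>
      have hk : g k < β := not_le.1 (Nat.find_min hex (hn ▸ k.lt_succ_self))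
      obtain ⟨b, ⟨⟨m, rfl⟩, hbβ⟩, hle⟩ := hunb (g k + 1) (hβ.succ_lt hk)
      have hkm : k < m := hg.1.lt_iff_lt.1 ((lt_add_one_self (g k)).trans_le hle)
      have hβm : β ≤ g m := (hn ▸ Nat.find_spec hex).trans (hg.1.monotone hkm)
      exact absurd hbβ (not_lt.2 hβm)

/-! ### The auxiliary club/ω-sequence at each point -/

def auxC (α : Ordinal) : Set Ordinal :=
  if h : ∃ C, CexProp XS α (XS α) C then h.choose
  else if h2 : ∃ f, OmegaSeq α f then Set.range h2.choose else ∅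

theorem auxC_pos {α : Ordinal} (h : ∃ C, CexProp XS α (XS α) C) :
    CexProp XS α (XS α) (auxC α) := by
  rw [auxC, dif_pos h]
  exact h.choose_spec

theorem auxC_neg {α : Ordinal} (h : ¬ ∃ C, CexProp XS α (XS α) C)
    (h2 : ∃ f, OmegaSeq α f) : ∃ g, OmegaSeq α g ∧ auxC α = Set.range g := by
  rw [auxC, dif_neg h, dif_pos h2]
  exact ⟨h2.choose, h2.choose_spec, rfl⟩

/-! ### sSup facts -/

theorem sSup_eq_self {β : Ordinal} {T : Set Ordinal} (h0 : 0 < β)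
    (hsucc : ∀ ξ < β, ξ + 1 < β) (hT : T ⊆ Set.Iio β)
    (hunb : ∀ a < β, ∃ b ∈ T, a ≤ b) : sSup T = β := by
  have hne : T.Nonempty := (hunb 0 h0).imp fun b hb => hb.1
  have hbdd : BddAbove T := ⟨β, fun x hx => (hT hx).le⟩
  refine le_antisymm (csSup_le hne fun x hx => (hT hx).le) ?_
  by_contra h
  push_neg at h
  obtain ⟨b, hbT, hble⟩ := hunb (sSup T + 1) (hsucc _ h)
  exact absurd (le_csSup hbdd hbT) (not_le.2 ((lt_add_one_self (sSup T)).trans_le hble))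

/-! ### The club of closure points inside a given club -/

theorem clubIn_inter_cl {E : Set Ordinal} {o : Ordinal} (hE : IsClubIn E o)
    (hcof : ℵ₀ < o.cof) (h2 : ∀ x < o, 2 * x + 2 < o) :
    IsClubIn (E ∩ {α | Cl α}) o := by
  obtain ⟨hEsub, hEunb, hEcl⟩ := hE
  refine ⟨fun x hx => hEsub hx.1, ?_, ?_⟩
  · intro a ha
    have pick : ∀ x, ∃ y, x < o → y ∈ E ∧ x ≤ y := by
      intro x
      by_cases hx : x < o
      · obtain ⟨y, hy1, hy2⟩ := hEunb x hx
        exact ⟨y, fun _ => ⟨hy1, hy2⟩⟩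
      · exact ⟨0, fun h => absurd h hx⟩
    choose p hp using pick
    obtain ⟨b, hb0, hbs⟩ : ∃ b : ℕ → Ordinal, b 0 = p a ∧ ∀ n, b (n + 1) = p (2 * (b n) + 2) :=
      ⟨fun n => Nat.rec (p a) (fun _ x => p (2 * x + 2)) n, rfl, fun n => rfl⟩
    have mem : ∀ n, b n ∈ E := by
      intro n
      induction n with
      | zero => rw [hb0]; exact (hp a ha).1
      | succ n ih => rw [hbs]; exact (hp _ (h2 _ (hEsub ih))).1
    have key : ∀ n, 2 * (b n) + 2 ≤ b (n + 1) := by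
      intro n
      rw [hbs]
      exact (hp _ (h2 _ (hEsub (mem n)))).2
    have hmono : ∀ n, b n < b (n + 1) := by
      intro n
      refine lt_of_lt_of_le ?_ (key n)
      calc b n ≤ 2 * b n := le_two_mul _
        _ < 2 * b n + 2 := lt_add_two _
    have hbdd : BddAbove (Set.range b) := ⟨o, by rintro _ ⟨n, rfl⟩; exact (hEsub (mem n)).le⟩
    have hlt : ∀ n, b n < ⨆ m, b m := fun n => (hmono n).trans_le (le_ciSup hbdd (n + 1))
    have hso : (⨆ m, b m) < o := by
      refine Ordinal.iSup_lt_ord_lift ?_ fun n => hEsub (mem n)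
      rw [Cardinal.mk_nat, Cardinal.lift_aleph0]
      exact hcof
    have hsE : (⨆ m, b m) ∈ E := by
      refine hEcl _ hso ⟨b 0, mem 0, hlt 0⟩ (le_antisymm (csSup_le ⟨b 0, mem 0, hlt 0⟩ fun x hx => hx.2.le) ?_)
      exact ciSup_le fun n => le_csSup ⟨⨆ m, b m, fun x hx => hx.2.le⟩ ⟨mem n, hlt n⟩
    have hsCl : Cl (⨆ m, b m) := by
      constructor
      · exact lt_of_le_of_lt zero_le (hlt 0)
      · intro ξ hξ
        obtain ⟨n, hn⟩ := (lt_ciSup_iff hbdd).1 hξ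
        calc 2 * ξ + 1 ≤ 2 * b n := by
              refine add_one_le_of_lt (two_mul_lt_two_mul hn)
          _ < 2 * b n + 2 := lt_add_two _
          _ ≤ b (n + 1) := key n
          _ < ⨆ m, b m := hlt (n + 1)
    exact ⟨⨆ m, b m, ⟨hsE, hsCl⟩, (hp a ha).2.trans (hb0 ▸ le_ciSup hbdd 0)⟩
  · intro a ha hne hsup
    have hsub' : (E ∩ {α | Cl α}) ∩ Set.Iio a ⊆ E ∩ Set.Iio a := fun x hx => ⟨hx.1.1, hx.2⟩
    have hne' : (E ∩ Set.Iio a).Nonempty := hne.imp fun x hx => hsub' hx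
    have haE : a ∈ E := by
      refine hEcl a ha hne' (le_antisymm (csSup_le hne' fun x hx => hx.2.le) ?_)
      calc a = sSup ((E ∩ {α | Cl α}) ∩ Set.Iio a) := hsup.symm
        _ ≤ sSup (E ∩ Set.Iio a) := csSup_le_csSup ⟨a, fun x hx => hx.2.le⟩ hne hsub'
    refine ⟨haE, ?_, ?_⟩
    · obtain ⟨x, hx⟩ := hne
      exact lt_of_le_of_lt zero_le hx.2
    · intro ξ hξ
      have hc : ∃ c ∈ (E ∩ {α | Cl α}) ∩ Set.Iio a, ξ < c := by
        by_contra h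
        push_neg at h
        have : sSup ((E ∩ {α | Cl α}) ∩ Set.Iio a) ≤ ξ := csSup_le hne h
        rw [hsup] at this
        exact absurd hξ (not_lt.2 this)
      obtain ⟨c, ⟨⟨-, hcCl⟩, hca⟩, hξc⟩ := hc
      exact (hcCl.2 ξ hξc).trans hca

end SubtleGuess

/-- If `κ` is subtle, then there are a stationary `S ⊆ E^κ_{>ω}` and a sequence
`⟨X_β ⊆ β : β < κ⟩` such that for every `α ∈ S` and every `Y ⊆ α`, the set
`{β < α | X_β = Y ∩ β}` is stationary in `α`. -/
theorem subtle_guessing_sets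
    (κ : Cardinal) (hreg : κ.IsRegular) (hunc : ℵ₀ < κ) (hsub : IsSubtle κ) :
    ∃ S : Set Ordinal, S ⊆ {o | o < κ.ord ∧ ℵ₀ < o.cof} ∧ StatIn S κ.ord ∧
      ∃ X : Ordinal → Set Ordinal, (∀ β : Ordinal, X β ⊆ Set.Iio β) ∧
        ∀ α ∈ S, ∀ Y ⊆ Set.Iio α,
          StatIn {β | β < α ∧ X β = Y ∩ Set.Iio β} α := by
  classical
  open SubtleGuess in
  refine ⟨{α | α < κ.ord ∧ ℵ₀ < α.cof ∧ ¬ SubtleGuess.Bad α},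
    fun α hα => ⟨hα.1, hα.2.1⟩, ?_, SubtleGuess.XS, SubtleGuess.XS_subset, ?_⟩
  · -- stationarity
    intro E hE
    by_contra hSE
    have key : ∀ α ∈ E, ℵ₀ < α.cof → SubtleGuess.Bad α := by
      intro α hαE hcofα
      by_contra hbad
      exact hSE ⟨α, ⟨hE.1 hαE, hcofα, hbad⟩, hαE⟩
    have hcofκ : ℵ₀ < κ.ord.cof := by rw [hreg.cof_eq]; exact hunc
    have h2x : ∀ x < κ.ord, 2 * x + 2 < κ.ord := by
      intro x hx
      rw [Cardinal.lt_ord] at hx ⊢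
      rw [Ordinal.card_add, Ordinal.card_mul]
      have c2 : ((2 : Ordinal)).card = 2 := by simp
      rw [c2]
      have h2κ : (2 : Cardinal) < κ := lt_of_lt_of_le (by exact_mod_cast Cardinal.nat_lt_aleph0 2) hunc.le
      exact Cardinal.add_lt_of_lt hunc.le (Cardinal.mul_lt_of_lt hunc.le h2κ hx) h2κ
    have hD : IsClubIn (E ∩ {α | SubtleGuess.Cl α}) κ.ord :=
      SubtleGuess.clubIn_inter_cl hE hcofκ h2x
    set D := E ∩ {α | SubtleGuess.Cl α} with hDdef
    set A : Ordinal → Set Ordinal :=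
      fun α => if α ∈ D then SubtleGuess.enc (SubtleGuess.XS α) (SubtleGuess.auxC α) else ∅
      with hAdef
    have hbig : ∀ γ ∈ D, SubtleGuess.auxC γ ⊆ Set.Iio γ ∧
        ∀ a < γ, ∃ b ∈ SubtleGuess.auxC γ, a ≤ b := by
      intro γ hγ
      by_cases hb : ∃ C, SubtleGuess.CexProp SubtleGuess.XS γ (SubtleGuess.XS γ) C
      · have h1 := SubtleGuess.auxC_pos hb
        exact ⟨h1.2.1.1, h1.2.1.2.1⟩
      · have hlim : Order.IsSuccLimit γ := hγ.2.isLimit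
        have hncof : ¬ ℵ₀ < γ.cof := fun h => hb (SubtleGuess.bad_self (key γ hγ.1 h))
        have hcofγ : γ.cof = ℵ₀ := le_antisymm (not_lt.1 hncof) (Ordinal.aleph0_le_cof.2 hlim)
        obtain ⟨g, hg, hEq⟩ := SubtleGuess.auxC_neg hb (SubtleGuess.exists_omegaSeq hlim hcofγ)
        rw [hEq]
        constructor
        · rintro x ⟨n, rfl⟩
          exact hg.2.1 n
        · intro a ha
          obtain ⟨n, hn⟩ := hg.2.2 a ha
          exact ⟨g n, ⟨n, rfl⟩, hn⟩
    have hA : ∀ β ∈ D, A β ⊆ Set.Iio β := by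
      intro β hβ
      simp only [hAdef, if_pos hβ]
      exact SubtleGuess.enc_subset hβ.2 (SubtleGuess.XS_subset β) (hbig β hβ).1
    obtain ⟨β, hβD, α, hαD, hβα, hAeq⟩ := hsub A D hD hA
    simp only [hAdef, if_pos hβD, if_pos hαD] at hAeq
    rw [SubtleGuess.enc_inter hβD.2] at hAeq
    obtain ⟨hXeq, hCeq⟩ := SubtleGuess.enc_inj hAeq
    obtain ⟨hCβsub, hCβunb⟩ := hbig β hβD
    by_cases hbα : ∃ C, SubtleGuess.CexProp SubtleGuess.XS α (SubtleGuess.XS α) C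
    · have h1 := SubtleGuess.auxC_pos hbα
      have hclub := h1.2.1
      have hne : (SubtleGuess.auxC α ∩ Set.Iio β).Nonempty := by
        obtain ⟨b, hbT, -⟩ := hCβunb 0 hβD.2.1
        exact ⟨b, by rw [← hCeq]; exact hbT⟩
      have hsup : sSup (SubtleGuess.auxC α ∩ Set.Iio β) = β := by
        rw [← hCeq]
        exact SubtleGuess.sSup_eq_self hβD.2.1 (fun ξ h => hβD.2.succ_lt h) hCβsub hCβunb
      have hβmem : β ∈ SubtleGuess.auxC α := hclub.2.2 β hβα hne hsup
      exact h1.2.2 β hβα hβmem hXeq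
    · have hlim : Order.IsSuccLimit α := hαD.2.isLimit
      have hncof : ¬ ℵ₀ < α.cof := fun h => hbα (SubtleGuess.bad_self (key α hαD.1 h))
      have hcofα : α.cof = ℵ₀ := le_antisymm (not_lt.1 hncof) (Ordinal.aleph0_le_cof.2 hlim)
      obtain ⟨g, hg, hEqα⟩ := SubtleGuess.auxC_neg hbα (SubtleGuess.exists_omegaSeq hlim hcofα)
      have hunb' : ∀ a < β, ∃ b ∈ Set.range g ∩ Set.Iio β, a ≤ b := by
        intro a ha
        obtain ⟨b, hbT, hab⟩ := hCβunb a ha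
        rw [hCeq, hEqα] at hbT
        exact ⟨b, hbT, hab⟩
      exact SubtleGuess.omegaSeq_discrete hg hβα hβD.2 hunb'
  · -- guessing
    intro α hα Y hY C hC
    by_contra hne
    refine hα.2.2 ⟨Y, C, hY, hC, fun β h1 h2 heq => hne ⟨β, ⟨h1, heq⟩, h2⟩⟩

end
end

section
/- If κ is a subtle cardinal, then there exists a stationary S ⊆ Reg(κ) \ {ω} such that ◇*_S(κ-trees) holds. -/
open Cardinal Ordinal Set

noncomputable section

open Order

namespace SDT
attribute [local instance] Classical.propDecidable


/-- Coding of a tagged pair of ordinals as a single ordinal. -/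
def enc (t : ℕ) (γ v : Ordinal) : Ordinal := ω ^ (ω * γ + t) * (v * 2 + 1)

lemma add_self_inj {v w : Ordinal} (h : v + v = w + w) : v = w := by
  rcases lt_trichotomy v w with hvw | hvw | hvw
  · exact absurd h (ne_of_lt ((add_lt_add_right hvw v).trans_le (add_le_add_left hvw.le w)))
  · exact hvw
  · exact absurd h.symm (ne_of_lt ((add_lt_add_right hvw w).trans_le (add_le_add_left hvw.le v)))

lemma mul_two_inj {v w : Ordinal} (h : v * 2 = w * 2) : v = w := by
  have h2 : (2 : Ordinal) = 1 + 1 := by norm_num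
  rw [h2, mul_add, mul_one, mul_add, mul_one] at h
  exact add_self_inj h

lemma omega_mul_add_inj {γ₁ γ₂ : Ordinal} {t₁ t₂ : ℕ}
    (h : ω * γ₁ + t₁ = ω * γ₂ + t₂) : γ₁ = γ₂ ∧ t₁ = t₂ := by
  have key : ∀ {a b : Ordinal} {s r : ℕ}, a < b → ω * a + s ≠ ω * b + r := by
    intro a b s r hab
    have h1 : ω * a + (s : Ordinal) < ω * a + ω := add_lt_add_right (nat_lt_omega0 s) _
    have h2 : ω * a + ω = ω * (a + 1) := by rw [mul_add, mul_one]
    have h3 : ω * (a + 1) ≤ ω * b := by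
      apply mul_le_mul_right
      rwa [add_one_eq_succ, Order.succ_le_iff]
    have h4 : ω * b ≤ ω * b + r := le_add_right le_rfl
    exact ne_of_lt (h1.trans_le ((h2 ▸ h3).trans h4))
  rcases lt_trichotomy γ₁ γ₂ with hg | hg | hg
  · exact absurd h (key hg)
  · subst hg
    refine ⟨rfl, ?_⟩
    have := add_left_cancel h
    exact_mod_cast this
  · exact absurd h.symm (key hg)

lemma mul_left_cancel0 {a b c : Ordinal} (ha : 0 < a) (h : a * b = a * c) : b = c := by
  rcases lt_trichotomy b c with hbc | hbc | hbc
  · exact absurd h (ne_of_lt (mul_lt_mul_of_pos_left hbc ha))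
  · exact hbc
  · exact absurd h.symm (ne_of_lt (mul_lt_mul_of_pos_left hbc ha))

lemma opow_mul_succ_inj {e₁ e₂ s₁ s₂ : Ordinal}
    (h : ω ^ e₁ * (s₁ + 1) = ω ^ e₂ * (s₂ + 1)) : e₁ = e₂ ∧ s₁ = s₂ := by
  have main : ∀ {a b u v : Ordinal}, a ≤ b → ω ^ a * (u + 1) = ω ^ b * (v + 1) → a = b := by
    intro a b u v hab heq
    obtain ⟨d, rfl⟩ : ∃ d, b = a + d := ⟨b - a, (Ordinal.add_sub_cancel_of_le hab).symm⟩
    rcases eq_or_ne d 0 with rfl | hd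
    · rw [add_zero]
    · exfalso
      rw [opow_add, mul_assoc] at heq
      have hcancel : u + 1 = ω ^ d * (v + 1) :=
        mul_left_cancel0 (opow_pos _ omega0_pos) heq
      have hlim : IsSuccLimit (ω ^ d * (v + 1)) := by
        apply isSuccLimit_mul_left (isSuccLimit_opow_left isSuccLimit_omega0 hd)
        exact lt_of_lt_of_le zero_lt_one (le_add_left le_rfl)
      rw [← hcancel] at hlim
      have := hlim.succ_lt (by rw [add_one_eq_succ]; exact Order.lt_succ u)
      rw [add_one_eq_succ] at this
      exact lt_irrefl _ this
  have he : e₁ = e₂ := by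
    rcases le_total e₁ e₂ with hle | hle
    · exact main hle h
    · exact (main hle h.symm).symm
  subst he
  refine ⟨rfl, ?_⟩
  have hs : s₁ + 1 = s₂ + 1 := mul_left_cancel0 (opow_pos _ omega0_pos) h
  rw [add_one_eq_succ, add_one_eq_succ] at hs
  exact Order.succ_injective hs

lemma enc_inj {t₁ t₂ : ℕ} {γ₁ γ₂ v₁ v₂ : Ordinal}
    (h : enc t₁ γ₁ v₁ = enc t₂ γ₂ v₂) : t₁ = t₂ ∧ γ₁ = γ₂ ∧ v₁ = v₂ := by
  unfold enc at h
  obtain ⟨he, hs⟩ := opow_mul_succ_inj h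
  obtain ⟨hg, ht⟩ := omega_mul_add_inj he
  exact ⟨ht, hg, mul_two_inj hs⟩

/-- `α` is an `ε`-point above `ω`. -/
def EpsPt (α : Ordinal) : Prop := ω < α ∧ ω ^ α = α

lemma EpsPt.add_lt {α x y : Ordinal} (h : EpsPt α) (hx : x < α) (hy : y < α) : x + y < α := by
  have := principal_add_omega0_opow α
  rw [h.2] at this
  exact this hx hy

lemma EpsPt.mul_lt {α x y : Ordinal} (h : EpsPt α) (hx : x < α) (hy : y < α) : x * y < α := by
  have := principal_mul_omega0_opow_opow α
  rw [h.2, h.2] at this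
  exact this hx hy

lemma EpsPt.opow_lt {α x : Ordinal} (h : EpsPt α) (hx : x < α) : ω ^ x < α := by
  calc ω ^ x < ω ^ α := (opow_lt_opow_iff_right one_lt_omega0).2 hx
  _ = α := h.2

lemma EpsPt.nat_lt {α : Ordinal} (h : EpsPt α) (n : ℕ) : (n : Ordinal) < α :=
  (nat_lt_omega0 n).trans h.1

lemma EpsPt.enc_lt {α γ v : Ordinal} {t : ℕ} (h : EpsPt α) (hγ : γ < α) (hv : v < α) :
    enc t γ v < α := by
  have h1 : ω * γ + t < α := h.add_lt (h.mul_lt h.1 hγ) (h.nat_lt t)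
  have h2 : v * 2 + 1 < α := h.add_lt (h.mul_lt hv (h.nat_lt 2)) (by simpa using h.nat_lt 1)
  exact h.mul_lt (h.opow_lt h1) h2

lemma isLimit_of_aleph0_lt_cof {o : Ordinal} (ho : ℵ₀ < o.cof) : IsSuccLimit o :=
  aleph0_le_cof.1 ho.le

/-- If a subset of a set `s ⊆ Iio a` has supremum `a`, so does `s`. -/
lemma sSup_eq_of_subset {s t : Set Ordinal} {a : Ordinal} (hs : s ⊆ Iio a)
    (hts : t ⊆ s) (htne : t.Nonempty) (ht : sSup t = a) : sSup s = a := by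
  apply le_antisymm
  · exact csSup_le (htne.mono hts) fun b hb => (hs hb).le
  · calc a = sSup t := ht.symm
      _ ≤ sSup s := csSup_le_csSup ⟨a, fun x hx => (hs hx).le⟩ htne hts

lemma sSup_mem_lt {s : Set Ordinal} {a b : Ordinal} (hb : b ∈ s) (hub : s ⊆ Iio a) :
    b ≤ sSup s := le_csSup ⟨a, fun x hx => (hub hx).le⟩ hb

/-- An unbounded-in-`a` subset of `Iio a`, `a` limit, has supremum `a`. -/
lemma sSup_eq_of_unbounded {s : Set Ordinal} {a : Ordinal} (ha : IsSuccLimit a)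
    (hsub : s ⊆ Iio a) (hunb : ∀ x < a, ∃ b ∈ s, x ≤ b) : sSup s = a := by
  apply le_antisymm
  · obtain ⟨b, hb, _⟩ := hunb 0 ha.pos
    exact csSup_le ⟨b, hb⟩ fun x hx => (hsub hx).le
  · by_contra hlt
    push_neg at hlt
    obtain ⟨b, hb, hle⟩ := hunb (succ (sSup s)) (ha.succ_lt hlt)
    have hss : Order.succ (sSup s) ≤ sSup s := hle.trans (sSup_mem_lt hb hsub)
    exact absurd hss (Order.lt_succ (sSup s)).not_ge

section Chains

variable {o : Ordinal.{0}} (ho : ℵ₀ < o.cof)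

include ho in
/-- The supremum of a strictly increasing ω-chain below `o` lies in any club
whose elements appear cofinally in the chain. -/
lemma iSup_nat_lt (x : ℕ → Ordinal.{0}) (hx : ∀ n, x n < o) : iSup x < o := by
  exact Ordinal.iSup_lt_ord (f := x) (a := o) (by rwa [mk_nat]) hx

end Chains

lemma isClubIn_inter {C D : Set Ordinal.{0}} {o : Ordinal.{0}} (ho : ℵ₀ < o.cof)
    (hC : IsClubIn C o) (hD : IsClubIn D o) : IsClubIn (C ∩ D) o := by
  have holim : IsSuccLimit o := isLimit_of_aleph0_lt_cof ho
  -- choice functions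
  have hCC : ∀ a < o, ∃ b ∈ C, a ≤ b := hC.2.1
  have hDD : ∀ a < o, ∃ b ∈ D, a ≤ b := hD.2.1
  classical
  set nextC : Ordinal → Ordinal := fun a => if h : a < o then Classical.choose (hCC a h) else 0
    with hnextC
  set nextD : Ordinal → Ordinal := fun a => if h : a < o then Classical.choose (hDD a h) else 0
    with hnextD
  have nextC_spec : ∀ a, a < o → nextC a ∈ C ∧ a ≤ nextC a ∧ nextC a < o := by
    intro a h
    have := Classical.choose_spec (hCC a h)
    simp only [hnextC, dif_pos h]
    exact ⟨this.1, this.2, hC.1 this.1⟩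
  have nextD_spec : ∀ a, a < o → nextD a ∈ D ∧ a ≤ nextD a ∧ nextD a < o := by
    intro a h
    have := Classical.choose_spec (hDD a h)
    simp only [hnextD, dif_pos h]
    exact ⟨this.1, this.2, hD.1 this.1⟩
  refine ⟨fun x hx => hC.1 hx.1, ?_, ?_⟩
  · -- unboundedness via interleaved chains
    intro a ha
    set step : Ordinal → Ordinal := fun b => nextD (succ (nextC (succ b))) with hstep
    have step_lt : ∀ b, b < o → step b < o := by
      intro b hb
      exact (nextD_spec _ (holim.succ_lt (nextC_spec _ (holim.succ_lt hb)).2.2)).2.2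
    have step_gt : ∀ b, b < o → b < step b := by
      intro b hb
      have h1 := nextC_spec (succ b) (holim.succ_lt hb)
      have h2 := nextD_spec (succ (nextC (succ b))) (holim.succ_lt h1.2.2)
      calc b < succ b := Order.lt_succ b
        _ ≤ nextC (succ b) := h1.2.1
        _ < succ _ := Order.lt_succ _
        _ ≤ step b := h2.2.1
    set x : ℕ → Ordinal := fun n => step^[n] (succ a) with hxdef
    have hx0 : x 0 = succ a := rfl
    have hxsucc : ∀ n, x (n + 1) = step (x n) := by
      intro n; simp [hxdef, Function.iterate_succ_apply']
    have hxlt : ∀ n, x n < o := by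
      intro n; induction n with
      | zero => exact holim.succ_lt ha
      | succ n ih => rw [hxsucc]; exact step_lt _ ih
    have hxmono : ∀ n, x n < x (n + 1) := fun n => (hxsucc n) ▸ step_gt _ (hxlt n)
    set s := iSup x with hs
    have hslt : s < o := iSup_nat_lt ho x hxlt
    have hles : ∀ n, x n ≤ s := fun n => Ordinal.le_iSup x n
    have hlts : ∀ n, x n < s := fun n => lt_of_lt_of_le (hxmono n) (hles (n + 1))
    have hslim : ∀ b < s, ∃ n, b < x n := by
      intro b hb
      obtain ⟨n, hn⟩ := Ordinal.lt_iSup_iff.1 hb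
      exact ⟨n, hn⟩
    -- members of C and D inside the chain
    have hcmem : ∀ n, nextC (succ (x n)) ∈ C ∧ x n < nextC (succ (x n)) ∧
        nextC (succ (x n)) < x (n + 1) := by
      intro n
      have h1 := nextC_spec (succ (x n)) (holim.succ_lt (hxlt n))
      have h2 := nextD_spec (succ (nextC (succ (x n)))) (holim.succ_lt h1.2.2)
      exact ⟨h1.1, lt_of_lt_of_le (Order.lt_succ _) h1.2.1,
        by rw [hxsucc]; exact lt_of_lt_of_le (Order.lt_succ _) h2.2.1⟩
    have hdmem : ∀ n, x (n + 1) ∈ D := by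
      intro n
      rw [hxsucc]
      exact (nextD_spec _ (holim.succ_lt (nextC_spec _ (holim.succ_lt (hxlt n))).2.2)).1
    have hslimit : IsSuccLimit s := by
      rw [Ordinal.isSuccLimit_iff, isSuccPrelimit_iff_succ_lt]
      refine ⟨?_, ?_⟩
      · intro h0
        exact absurd (h0 ▸ hlts 0) (by simp)
      · intro b hb
        obtain ⟨n, hn⟩ := hslim b hb
        exact lt_of_le_of_lt (Order.succ_le_of_lt hn) (hlts n)
    have hsC : s ∈ C := by
      refine hC.2.2 s hslt ⟨nextC (succ (x 0)), (hcmem 0).1, lt_trans (hcmem 0).2.2 (hlts 1)⟩ ?_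
      apply sSup_eq_of_unbounded hslimit (fun y hy => hy.2)
      intro b hb
      obtain ⟨n, hn⟩ := hslim b hb
      exact ⟨nextC (succ (x n)), ⟨(hcmem n).1, lt_trans (hcmem n).2.2 (hlts (n+1))⟩,
        le_of_lt (lt_trans hn (hcmem n).2.1)⟩
    have hsD : s ∈ D := by
      refine hD.2.2 s hslt ⟨x 1, hdmem 0, hlts 1⟩ ?_
      apply sSup_eq_of_unbounded hslimit (fun y hy => hy.2)
      intro b hb
      obtain ⟨n, hn⟩ := hslim b hb
      exact ⟨x (n+1), ⟨hdmem n, hlts (n+1)⟩, le_of_lt (lt_trans hn (hxmono n))⟩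
    exact ⟨s, ⟨hsC, hsD⟩, le_of_lt (lt_of_lt_of_le (Order.lt_succ a) (hles 0))⟩
  · -- closedness
    intro a ha hne hsup
    have h1 : a ∈ C := hC.2.2 a ha (hne.mono fun x hx => ⟨hx.1.1, hx.2⟩)
      (sSup_eq_of_subset (fun x hx => hx.2) (fun x hx => ⟨hx.1.1, hx.2⟩) hne hsup)
    have h2 : a ∈ D := hD.2.2 a ha (hne.mono fun x hx => ⟨hx.1.2, hx.2⟩)
      (sSup_eq_of_subset (fun x hx => hx.2) (fun x hx => ⟨hx.1.2, hx.2⟩) hne hsup)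
    exact ⟨h1, h2⟩

lemma isClubIn_cp {o : Ordinal.{0}} (h : Ordinal.{0} → Ordinal.{0}) (ho : ℵ₀ < o.cof)
    (hcard : ∀ x < o, x.card < o.cof) (hh : ∀ β < o, h β < o) :
    IsClubIn {α | α < o ∧ ∀ β < α, h β < α} o := by
  have holim : IsSuccLimit o := isLimit_of_aleph0_lt_cof ho
  refine ⟨fun x hx => hx.1, ?_, ?_⟩
  · intro a ha
    set step : Ordinal.{0} → Ordinal.{0} :=
      fun b => max (succ b) (Ordinal.bsup b (fun β _ => succ (h β))) with hstep
    have step_lt : ∀ b, b < o → step b < o := by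
      intro b hb
      apply max_lt (holim.succ_lt hb)
      exact Ordinal.bsup_lt_ord (hcard b hb) (fun i hi => holim.succ_lt (hh i (hi.trans hb)))
    have step_ge : ∀ b, b < step b := fun b => lt_of_lt_of_le (Order.lt_succ b) (le_max_left _ _)
    set y : ℕ → Ordinal.{0} := fun n => step^[n] (succ a) with hy
    have hy0 : y 0 = succ a := rfl
    have hysucc : ∀ n, y (n + 1) = step (y n) := by
      intro n; simp [hy, Function.iterate_succ_apply']
    have hylt : ∀ n, y n < o := by
      intro n; induction n with
      | zero => exact holim.succ_lt ha
      | succ n ih => rw [hysucc]; exact step_lt _ ih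
    have hymono : ∀ n, y n < y (n + 1) := fun n => (hysucc n) ▸ step_ge (y n)
    set s := iSup y with hs
    have hslt : s < o := iSup_nat_lt ho y hylt
    have hles : ∀ n, y n ≤ s := fun n => Ordinal.le_iSup y n
    have hlts : ∀ n, y n < s := fun n => lt_of_lt_of_le (hymono n) (hles (n + 1))
    refine ⟨s, ⟨hslt, ?_⟩, le_of_lt (lt_of_lt_of_le (Order.lt_succ a) (hles 0))⟩
    intro β hβ
    obtain ⟨n, hn⟩ := Ordinal.lt_iSup_iff.1 hβ
    have h1 : succ (h β) ≤ Ordinal.bsup (y n) (fun β _ => succ (h β)) :=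
      Ordinal.le_bsup _ β hn
    have h2 : h β < y (n + 1) := by
      rw [hysucc]
      exact lt_of_lt_of_le (lt_of_lt_of_le (Order.lt_succ _) h1) (le_max_right _ _)
    exact h2.trans_le (hles (n + 1))
  · intro a ha hne hsup
    refine ⟨ha, ?_⟩
    intro β hβ
    obtain ⟨x, hx, hβx⟩ := exists_lt_of_lt_csSup hne (hsup ▸ hβ)
    exact (hx.1.2 β hβx).trans hx.2

lemma isClubIn_eps {o : Ordinal.{0}} (ho : ℵ₀ < o.cof) (hω : ω < o)
    (hopow : ∀ x < o, ω ^ x < o) : IsClubIn {α | α < o ∧ EpsPt α} o := by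
  have holim : IsSuccLimit o := isLimit_of_aleph0_lt_cof ho
  refine ⟨fun x hx => hx.1, ?_, ?_⟩
  · intro a ha
    set α := nfp (ω ^ ·) (max (succ a) (succ ω)) with hα
    have hmax : max (succ a) (succ ω) < o := max_lt (holim.succ_lt ha) (holim.succ_lt hω)
    have hαlt : α < o := nfp_lt_ord ho hopow hmax
    have hle : max (succ a) (succ ω) ≤ α := le_nfp _ _
    refine ⟨α, ⟨hαlt, ?_, ?_⟩, ?_⟩
    · exact lt_of_lt_of_le (lt_of_lt_of_le (Order.lt_succ ω) (le_max_right _ _)) hle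
    · exact nfp_fp (isNormal_opow one_lt_omega0) _
    · exact le_of_lt (lt_of_lt_of_le (lt_of_lt_of_le (Order.lt_succ a) (le_max_left _ _)) hle)
  · intro a ha hne hsup
    have hne2 := hne
    obtain ⟨x₀, hx₀⟩ := hne2
    have hωa : ω < a := hx₀.1.2.1.trans hx₀.2
    have halim : IsSuccLimit a := by
      rw [Ordinal.isSuccLimit_iff, isSuccPrelimit_iff_succ_lt]
      refine ⟨fun h0 => ?_, fun b hb => ?_⟩
      · rw [h0] at hωa; exact absurd hωa (by simp)
      · obtain ⟨x, hx, hbx⟩ := exists_lt_of_lt_csSup hne (hsup ▸ hb)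
        exact lt_of_le_of_lt (Order.succ_le_of_lt hbx) hx.2
    refine ⟨ha, hωa, le_antisymm ?_ (right_le_opow a one_lt_omega0)⟩
    rw [(isNormal_opow one_lt_omega0).le_iff_forall_le halim]
    intro b hb
    obtain ⟨x, hx, hbx⟩ := exists_lt_of_lt_csSup hne (hsup ▸ hb)
    calc ω ^ b ≤ ω ^ x := by
          exact opow_le_opow_right omega0_pos hbx.le
      _ = x := by exact hx.1.2.2
      _ ≤ a := le_of_lt hx.2

/-- `(g, c)` is a counterexample at `β` against the guessing sequence `F`:
`g` is a total `β`-sequence with values `< β` and `c` is a club in `β` on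
which `g` is never guessed. -/
def CE (β : Ordinal) (F : Ordinal → TSeq) (g : TSeq) (c : Set Ordinal) : Prop :=
  (∀ o : Ordinal, g o ≠ none ↔ o < β) ∧ (∀ o v, g o = some v → v < β) ∧
    IsClubIn c β ∧ ∀ γ ∈ c, tres g γ ≠ F γ

/-- The guessing sequence, built by recursion: at each `β`, guess the least
counterexample against what was built so far, if one exists. -/
def fseq : Ordinal → TSeq :=
  lt_wf.fix fun β ih =>
    if h : ∃ gc : TSeq × Set Ordinal,
        CE β (fun γ => if hγ : γ < β then ih γ hγ else fun _ => none) gc.1 gc.2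
    then (Classical.choose h).1 else fun _ => none

/-- The truncation of `fseq` below `β`. -/
def trunc (β : Ordinal) : Ordinal → TSeq :=
  fun γ => if hγ : γ < β then fseq γ else fun _ => none

/-- There is a counterexample at `β` against `fseq` (truncated below `β`). -/
def CEat (β : Ordinal) : Prop :=
  ∃ gc : TSeq × Set Ordinal, CE β (trunc β) gc.1 gc.2

lemma fseq_eq (β : Ordinal) :
    fseq β = if h : CEat β then (Classical.choose h).1 else fun _ => none := by
  rw [fseq, WellFounded.fix_eq]
  rfl

lemma fseq_spec {β : Ordinal} (h : CEat β) : fseq β = (Classical.choose h).1 := by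
  rw [fseq_eq, dif_pos h]

/-- `α` is an uncountable regular cardinal (as an ordinal). -/
def RegUnc (α : Ordinal) : Prop :=
  α.card.ord = α ∧ α.card.IsRegular ∧ (ω : Ordinal) < α

lemma RegUnc.isLimit {α : Ordinal} (h : RegUnc α) : IsSuccLimit α := by
  have : ℵ₀ ≤ α.card := h.2.1.1
  rw [← h.1]
  exact isSuccLimit_ord this

lemma RegUnc.pos {α : Ordinal} (h : RegUnc α) : 0 < α :=
  lt_trans omega0_pos h.2.2

/-- Below the `ord` of a regular uncountable cardinal, `ω ^ ·` stays below. -/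
lemma opow_lt_ord {κ : Cardinal.{0}} (hreg : κ.IsRegular) (hunc : ℵ₀ < κ) :
    ∀ x < κ.ord, ω ^ x < κ.ord := by
  intro x
  induction x using limitRecOn with
  | zero =>
    intro _
    have hω : ω < κ.ord := by rw [← ord_aleph0]; exact ord_lt_ord.2 hunc
    rw [opow_zero]
    exact lt_trans one_lt_omega0 hω
  | add_one y ih =>
    intro hy
    have hy' : y < κ.ord := lt_of_le_of_lt (le_succ y) hy
    rw [opow_add_one]
    rw [lt_ord, card_mul]
    exact mul_lt_of_lt hreg.1 (lt_ord.1 (ih hy')) (by simpa [card_omega0] using hunc)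
  | limit y hy ih =>
    intro hyκ
    rw [opow_limit omega0_ne_zero hy]
    apply lift_iSup_lt_of_lt_cof (f := fun x : Iio y => ω ^ x.1) _ (fun i => ih i.1 i.2 (i.2.trans hyκ))
    rw [Cardinal.lift_uzero, Ordinal.mk_Iio_ordinal, ← Ordinal.lift_cof, IsRegular.cof_eq hreg]
    exact Cardinal.lift_lt.2 (lt_ord.1 hyκ)

/-- If `α > ω` is not an uncountable regular cardinal then `α.cof.ord < α`. -/
lemma cof_ord_lt_of_not_regUnc {α : Ordinal} (hω : ω < α) (h : ¬ RegUnc α) :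
    α.cof.ord < α := by
  by_cases hcard : α.card.ord = α
  · have haleph : ℵ₀ ≤ α.card := by
      rw [← card_omega0]; exact card_le_card hω.le
    have hnreg : ¬ α.card.IsRegular := fun hr => h ⟨hcard, hr, hω⟩
    have : α.card.ord.cof < α.card := by
      by_contra hle
      push_neg at hle
      exact hnreg ⟨haleph, hle⟩
    rw [hcard] at this
    calc α.cof.ord < α.card.ord := ord_lt_ord.2 this
      _ = α := hcard
  · calc α.cof.ord ≤ α.card.ord := ord_le_ord.2 (cof_le_card α)
      _ < α := lt_of_le_of_ne (ord_card_le α) hcard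


/-- A choice of fundamental sequence for each ordinal. -/
def Fc (α : Ordinal.{0}) : ∀ i < α.cof.ord, Ordinal.{0} :=
  Classical.choose (exists_fundamental_sequence α)

lemma Fc_spec (α : Ordinal.{0}) : IsFundamentalSequence α α.cof.ord (Fc α) :=
  Classical.choose_spec (exists_fundamental_sequence α)

/-- Coding of a witness of singularity (or non-cardinality) of `α`. -/
def singCode (α : Ordinal.{0}) : Set Ordinal :=
  {x | x = enc 1 0 α.cof.ord} ∪ {x | ∃ i, ∃ h : i < α.cof.ord, x = enc 2 i (Fc α i h)}

/-- Coding of the chosen counterexample at `β`. -/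
def ceCode (β : Ordinal.{0}) (h : CEat β) : Set Ordinal :=
  {x | ∃ γ v, (Classical.choose h).1 γ = some v ∧ x = enc 3 γ v} ∪
    {x | ∃ γ, γ ∈ (Classical.choose h).2 ∧ x = enc 4 γ 0}

def Acode (β : Ordinal.{0}) : Set Ordinal :=
  if h : CEat β ∧ RegUnc β then ceCode β h.1
  else if RegUnc β then ∅ else singCode β

lemma Acode_ce {β : Ordinal.{0}} (h1 : CEat β) (h2 : RegUnc β) : Acode β = ceCode β h1 := by
  rw [Acode, dif_pos (⟨h1, h2⟩ : CEat β ∧ RegUnc β)]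

lemma Acode_sing {β : Ordinal.{0}} (h2 : ¬ RegUnc β) : Acode β = singCode β := by
  rw [Acode, dif_neg (fun h => h2 h.2), if_neg h2]

lemma blsub_congr' {o o' : Ordinal.{0}} (f : ∀ i < o, Ordinal.{0}) (g : ∀ i < o', Ordinal.{0})
    (h : o = o') (hfg : ∀ i (hi : i < o) (hi' : i < o'), f i hi = g i hi') :
    Ordinal.blsub o f = Ordinal.blsub o' g := by
  subst h
  apply le_antisymm
  · exact Ordinal.blsub_le fun i hi => by rw [hfg i hi hi]; exact Ordinal.lt_blsub g i hi
  · exact Ordinal.blsub_le fun i hi => by rw [← hfg i hi hi]; exact Ordinal.lt_blsub f i hi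

/-- The key application of subtlety: the set of uncountable regular cardinals
at which there is no counterexample is stationary. -/
theorem Sset_stat {κ : Cardinal.{0}} (hreg : κ.IsRegular) (hunc : ℵ₀ < κ)
    (hsub : IsSubtle κ) :
    StatIn {α | α < κ.ord ∧ RegUnc α ∧ ¬ CEat α} κ.ord := by
  intro E hE
  by_contra hemp
  rw [Set.not_nonempty_iff_eq_empty] at hemp
  have hcof : κ.ord.cof = κ := hreg.cof_eq
  have ho : ℵ₀ < κ.ord.cof := by rw [hcof]; exact hunc
  have hω : ω < κ.ord := by rw [← ord_aleph0]; exact ord_lt_ord.2 hunc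
  have hopow := opow_lt_ord hreg hunc
  have hΛclub : IsClubIn {α | α < κ.ord ∧ EpsPt α} κ.ord := isClubIn_eps ho hω hopow
  set D : Set Ordinal := E ∩ {α | α < κ.ord ∧ EpsPt α} with hDdef
  have hDclub : IsClubIn D κ.ord := isClubIn_inter ho hE hΛclub
  have hDeps : ∀ β ∈ D, EpsPt β := fun β hβ => hβ.2.2
  have hDce : ∀ β ∈ D, RegUnc β → CEat β := by
    intro β hβ hR
    by_contra hCE
    have hmem : β ∈ {α | α < κ.ord ∧ RegUnc α ∧ ¬ CEat α} ∩ E :=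
      ⟨⟨hβ.2.1, hR, hCE⟩, hβ.1⟩
    rw [hemp] at hmem
    exact hmem
  -- the coding sets are subsets of their index
  have hAsub : ∀ β ∈ D, Acode β ⊆ Set.Iio β := by
    intro β hβ x hx
    have heps := hDeps β hβ
    by_cases hR : RegUnc β
    · have hce := hDce β hβ hR
      rw [Acode_ce hce hR] at hx
      have spec := Classical.choose_spec hce
      rcases hx with ⟨γ, v, hγv, rfl⟩ | ⟨γ, hγ, rfl⟩
      · have hγβ : γ < β := (spec.1 γ).1 (by simp [hγv])
        exact heps.enc_lt hγβ (spec.2.1 γ v hγv)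
      · exact heps.enc_lt (spec.2.2.1.1 hγ) (lt_trans omega0_pos heps.1)
    · rw [Acode_sing hR] at hx
      have hcofα : β.cof.ord < β := cof_ord_lt_of_not_regUnc heps.1 hR
      rcases hx with rfl | ⟨i, hi, rfl⟩
      · exact heps.enc_lt (lt_trans omega0_pos heps.1) hcofα
      · exact heps.enc_lt (hi.trans hcofα) ((Fc_spec β).lt hi)
  obtain ⟨β, hβD, α, hαD, hβα, hAeq⟩ := hsub Acode D hDclub hAsub
  by_cases hRβ : RegUnc β <;> by_cases hRα : RegUnc α
  · -- both regular: the main contradiction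
    have hCEβ := hDce β hβD hRβ
    have hCEα := hDce α hαD hRα
    have specβ := Classical.choose_spec hCEβ
    have specα := Classical.choose_spec hCEα
    rw [Acode_ce hCEβ hRβ, Acode_ce hCEα hRα] at hAeq
    -- (1) the counterexample at α restricts to the one at β
    have hgres : tres (Classical.choose hCEα).1 β = (Classical.choose hCEβ).1 := by
      funext o
      by_cases ho' : o < β
      · have hne : (Classical.choose hCEβ).1 o ≠ none := (specβ.1 o).2 ho'
        obtain ⟨v, hv⟩ := Option.ne_none_iff_exists'.1 hne
        have hx : enc 3 o v ∈ ceCode β hCEβ := Or.inl ⟨o, v, hv, rfl⟩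
        rw [hAeq] at hx
        rcases hx.1 with ⟨γ, w, hγw, heq⟩ | ⟨γ, hγ, heq⟩
        · obtain ⟨-, hγo, hvw⟩ := enc_inj heq
          rw [tres]; simp only [if_pos ho']
          rw [← hγo] at hγw
          rw [hγw, ← hvw, hv]
        · exact absurd (enc_inj heq).1 (by norm_num)
      · rw [tres]; simp only [if_neg ho']
        symm
        by_contra hne
        exact ho' ((specβ.1 o).1 hne)
    -- (2) the club at β is contained in the one at α
    have hcsub : (Classical.choose hCEβ).2 ⊆ (Classical.choose hCEα).2 ∩ Set.Iio β := by
      intro γ hγ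
      have hx : enc 4 γ 0 ∈ ceCode β hCEβ := Or.inr ⟨γ, hγ, rfl⟩
      rw [hAeq] at hx
      refine ⟨?_, specβ.2.2.1.1 hγ⟩
      rcases hx.1 with ⟨γ', w, hγw, heq⟩ | ⟨γ', hγ', heq⟩
      · exact absurd (enc_inj heq).1 (by norm_num)
      · rw [(enc_inj heq).2.1]; exact hγ'
    -- (3) β is a limit point of the club at α, hence in it
    have hβcα : β ∈ (Classical.choose hCEα).2 := by
      have hclubβ := specβ.2.2.1
      have hclubα := specα.2.2.1
      obtain ⟨b, hb, -⟩ := hclubβ.2.1 0 hRβ.pos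
      refine hclubα.2.2 β hβα ⟨b, hcsub hb⟩ ?_
      apply sSup_eq_of_unbounded hRβ.isLimit (fun y hy => hy.2)
      intro x hx
      obtain ⟨b', hb', hxb'⟩ := hclubβ.2.1 x hx
      exact ⟨b', hcsub hb', hxb'⟩
    -- (4) contradiction with the avoidance property of the counterexample at α
    have havoid := specα.2.2.2 β hβcα
    apply havoid
    rw [hgres, trunc, dif_pos hβα, fseq_spec hCEβ]
  · -- β regular, α not: tag clash 3 vs {1,2}
    have hCEβ := hDce β hβD hRβ
    have specβ := Classical.choose_spec hCEβ
    rw [Acode_ce hCEβ hRβ, Acode_sing hRα] at hAeq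
    have hne : (Classical.choose hCEβ).1 0 ≠ none := (specβ.1 0).2 hRβ.pos
    obtain ⟨v, hv⟩ := Option.ne_none_iff_exists'.1 hne
    have hx : enc 3 0 v ∈ ceCode β hCEβ := Or.inl ⟨0, v, hv, rfl⟩
    rw [hAeq] at hx
    rcases hx.1 with heq | ⟨i, hi, heq⟩
    · exact absurd (enc_inj heq).1 (by norm_num)
    · exact absurd (enc_inj heq).1 (by norm_num)
  · -- β not regular, α regular: tag clash 1 vs {3,4}
    have hCEα := hDce α hαD hRα
    rw [Acode_sing hRβ, Acode_ce hCEα hRα] at hAeq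
    have hx : enc 1 0 β.cof.ord ∈ singCode β := Or.inl rfl
    rw [hAeq] at hx
    rcases hx.1 with ⟨γ, w, hγw, heq⟩ | ⟨γ, hγ, heq⟩
    · exact absurd (enc_inj heq).1 (by norm_num)
    · exact absurd (enc_inj heq).1 (by norm_num)
  · -- both singular: fundamental sequences coincide, so β = α
    rw [Acode_sing hRβ, Acode_sing hRα] at hAeq
    have hx : enc 1 0 β.cof.ord ∈ singCode β := Or.inl rfl
    rw [hAeq] at hx
    have hρ : β.cof.ord = α.cof.ord := by
      rcases hx.1 with heq | ⟨i, hi, heq⟩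
      · exact (enc_inj heq).2.2
      · exact absurd (enc_inj heq).1 (by norm_num)
    have hFeq : ∀ i (hi : i < β.cof.ord) (hi' : i < α.cof.ord), Fc β i hi = Fc α i hi' := by
      intro i hi hi'
      have hx2 : enc 2 i (Fc β i hi) ∈ singCode β := Or.inr ⟨i, hi, rfl⟩
      rw [hAeq] at hx2
      rcases hx2.1 with heq | ⟨i', hi2, heq⟩
      · exact absurd (enc_inj heq).1 (by norm_num)
      · obtain ⟨-, hii', hval⟩ := enc_inj heq
        subst hii'
        exact hval
    have : β = α := by
      rw [← (Fc_spec β).blsub_eq, ← (Fc_spec α).blsub_eq]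
      exact blsub_congr' (Fc β) (Fc α) hρ hFeq
    exact absurd this (ne_of_lt hβα)

/-- The set of ordinal values appearing in level `β` of `T`. -/
def Vals (T : Set TSeq) (β : Ordinal.{0}) : Set Ordinal.{0} :=
  {w | ∃ f ∈ tlevel T β, ∃ o, f o = some w}

lemma mk_Vals_lt {κ : Cardinal.{0}} {T : Set TSeq} (hT : IsStreamlined κ T)
    (hreg : κ.IsRegular) {β : Ordinal.{0}} (hβ : β < κ.ord) :
    #(Vals T β) < Cardinal.lift.{1} κ := by
  set φ : ↥(tlevel T β) × ↥(Set.Iio β) → Ordinal.{0} :=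
    fun p => (p.1.1 p.2.1).getD 0 with hφ
  have hsub : Vals T β ⊆ Set.range φ := by
    rintro w ⟨f, hf, o, hfo⟩
    have ho : o < β := (hf.2 o).1 (by simp [hfo])
    exact ⟨⟨⟨f, hf⟩, ⟨o, ho⟩⟩, by simp [hφ, hfo]⟩
  calc #(Vals T β) ≤ #(Set.range φ) := mk_le_mk_of_subset hsub
    _ ≤ #(↥(tlevel T β) × ↥(Set.Iio β)) := mk_range_le
    _ = #(tlevel T β) * #(Set.Iio β) := by rw [mk_prod, Cardinal.lift_id, Cardinal.lift_id]
    _ < Cardinal.lift.{1} κ := by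
        apply mul_lt_of_lt (by rw [← Cardinal.lift_aleph0.{1,0}]; exact Cardinal.lift_le.2 hreg.1)
          (hT.level_small β hβ)
        rw [Ordinal.mk_Iio_ordinal]
        exact Cardinal.lift_lt.2 (lt_ord.1 hβ)

/-- A strict upper bound for the values appearing in level `β` of `T`. -/
def vfun (T : Set TSeq) (β : Ordinal.{0}) : Ordinal.{0} :=
  sSup ((fun w => w + 1) '' Vals T β)

lemma vfun_bddAbove {κ : Cardinal.{0}} {T : Set TSeq} (hT : IsStreamlined κ T)
    (β : Ordinal.{0}) : ∀ x ∈ (fun w => w + 1) '' Vals T β, x ≤ κ.ord := by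
  rintro x ⟨w, ⟨f, hf, o, hfo⟩, rfl⟩
  have : w < κ.ord := hT.values f hf.1 o w hfo
  show w + 1 ≤ κ.ord
  rw [add_one_eq_succ]
  exact Order.succ_le_of_lt this

lemma vfun_mem {κ : Cardinal.{0}} {T : Set TSeq} (hT : IsStreamlined κ T)
    {β w : Ordinal.{0}} (hw : w ∈ Vals T β) : w < vfun T β := by
  have h1 : w + 1 ≤ vfun T β :=
    le_csSup ⟨κ.ord, fun x hx => vfun_bddAbove hT β x hx⟩ ⟨w, hw, rfl⟩
  exact lt_of_lt_of_le (by rw [add_one_eq_succ]; exact Order.lt_succ w) h1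

lemma vfun_lt {κ : Cardinal.{0}} {T : Set TSeq} (hT : IsStreamlined κ T)
    (hreg : κ.IsRegular) (hunc : ℵ₀ < κ) {β : Ordinal.{0}} (hβ : β < κ.ord) :
    vfun T β < κ.ord := by
  have hord0 : (0 : Ordinal) < κ.ord := by
    rw [lt_ord]; simpa using lt_trans aleph0_pos hunc
  rcases Set.eq_empty_or_nonempty (Vals T β) with he | hne
  · rw [vfun, he, Set.image_empty, csSup_empty]
    exact hord0
  · obtain ⟨c₀, hc₀lt, hc₀eq⟩ := Cardinal.lt_lift_iff.1 (mk_Vals_lt hT hreg hβ)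
    have hmk : #(ULift.{1, 0} c₀.out) = #(Vals T β) := by
      rw [mk_uLift, mk_out, hc₀eq]
    obtain ⟨e⟩ := Cardinal.eq.1 hmk
    set g : c₀.out → Ordinal.{0} := fun i => ((e ⟨i⟩ : ↥(Vals T β)) : Ordinal) + 1 with hg
    have hglt : ∀ i, g i < κ.ord := by
      intro i
      obtain ⟨f, hf, o, hfo⟩ := (e ⟨i⟩).2
      have hv : ((e ⟨i⟩ : ↥(Vals T β)) : Ordinal) < κ.ord := hT.values f hf.1 o _ hfo
      rw [hg]
      simp only []
      rw [add_one_eq_succ]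
      exact (isSuccLimit_ord hreg.1).succ_lt hv
    have hsup : iSup g < κ.ord :=
      Ordinal.iSup_lt_ord (f := g) (a := κ.ord)
        (by rw [mk_out, hreg.cof_eq]; exact hc₀lt) hglt
    apply lt_of_le_of_lt _ hsup
    apply csSup_le (hne.image _)
    rintro x ⟨w, hw, rfl⟩
    have hx : w + 1 = g ((e.symm ⟨w, hw⟩).down) := by
      rw [hg]
      simp only []
      congr 1
      have : (⟨(e.symm ⟨w, hw⟩).down⟩ : ULift.{1,0} c₀.out) = e.symm ⟨w, hw⟩ := rfl
      rw [this, Equiv.apply_symm_apply]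
    show w + 1 ≤ iSup g
    rw [hx]
    exact Ordinal.le_iSup g _

end SDT

open SDT in
/-- If `κ` is subtle, then there exists a stationary set `S` of uncountable
regular cardinals below `κ` such that `◇*_S(κ-trees)` holds. -/
theorem subtle_implies_diamond_star_trees
    (κ : Cardinal) (hreg : κ.IsRegular) (hunc : ℵ₀ < κ) (hsub : IsSubtle κ) :
    ∃ S : Set Ordinal,
      S ⊆ {o | o < κ.ord ∧ o.card.ord = o ∧ o.card.IsRegular ∧ (Ordinal.omega0 : Ordinal) < o} ∧
      StatIn S κ.ord ∧
      ∃ f_ : Ordinal → TSeq, DiamondStarTreesWitness κ S (Set.Iio κ.ord) f_ := by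
  refine ⟨{α | α < κ.ord ∧ RegUnc α ∧ ¬ CEat α}, ?_, Sset_stat hreg hunc hsub, fseq, ?_⟩
  · intro o ho
    exact ⟨ho.1, ho.2.1.1, ho.2.1.2.1, ho.2.1.2.2⟩
  · intro T hT
    have hcof : κ.ord.cof = κ := hreg.cof_eq
    have ho : ℵ₀ < κ.ord.cof := by rw [hcof]; exact hunc
    have hcard : ∀ x < κ.ord, x.card < κ.ord.cof := by
      intro x hx; rw [hcof]; exact lt_ord.1 hx
    classical
    set h : Ordinal.{0} → Ordinal.{0} :=
      fun β => if hβ : β < κ.ord then vfun T β else 0 with hhdef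
    have hval : ∀ β < κ.ord, h β < κ.ord := by
      intro β hβ
      rw [hhdef]
      simp only [dif_pos hβ]
      exact vfun_lt hT hreg hunc hβ
    refine ⟨{α | α < κ.ord ∧ ∀ β < α, h β < α}, isClubIn_cp h ho hcard hval, ?_⟩
    rintro α ⟨hαS, hαD⟩ f hf
    intro c hc
    by_contra hne
    rw [Set.not_nonempty_iff_eq_empty] at hne
    apply hαS.2.2
    refine ⟨(f, c), hf.2, ?_, hc, ?_⟩
    · -- values of `f` are below `α`
      intro o v hov
      have hov' : f o = some v := hov
      have ho' : o < α := (hf.2 o).1 (by simp [hov'])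
      have hso : Order.succ o < α := hαS.2.1.isLimit.succ_lt ho'
      have hsoκ : Order.succ o < κ.ord := hso.trans hαS.1
      have hmem : v ∈ Vals T (Order.succ o) := by
        refine ⟨tres f (Order.succ o), ⟨hT.downward f hf.1 _, ?_⟩, o, ?_⟩
        · intro o'
          constructor
          · intro hne'
            by_contra hlt
            rw [tres, if_neg hlt] at hne'
            exact hne' rfl
          · intro ho''
            rw [tres, if_pos ho'']
            exact (hf.2 o').2 (lt_of_lt_of_le ho'' (Order.succ_le_of_lt ho'))
        · rw [tres, if_pos (Order.lt_succ o)]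
          exact hov'
      have hv1 : v < vfun T (Order.succ o) := vfun_mem hT hmem
      have hv2 : vfun T (Order.succ o) < α := by
        have h2 := hαD.2 (Order.succ o) hso
        simp only [hhdef] at h2
        rwa [dif_pos hsoκ] at h2
      exact lt_trans hv1 hv2
    · -- `f` is never guessed on `c`
      intro γ hγ heq
      have hγα : γ < α := hc.1 hγ
      have hmem : γ ∈ {β | β ∈ Set.Iio κ.ord ∧ β < α ∧ tres f β = fseq β} ∩ c := by
        refine ⟨⟨hγα.trans hαS.1, hγα, ?_⟩, hγ⟩
        rw [heq, trunc, dif_pos hγα]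
      rw [hne] at hmem
      exact hmem

end
end
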